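/- arXiv:1602.05837 — 10 statements merged into one kernel-verified Lean document; each statement's English description precedes it below -/
import Mathlib

section
/- Let n ≥ 1, let A : [n]×[n] → ℝ satisfy |A[i,j]| ≤ M for all i,j, where M > 0, and set M' = 10M, M'' = 100M. Define D : [n]×[n] → ℝ by D[i,j] = M'+M'' if i=j and D[i,j] = M'' otherwise, and define B : [2n]×[2n] → ℝ by B[i,j] = A[i,j] if i,j ≤ n; B[i,j] = −A[j−n, i] if i ≤ n < j; B[i,j] = −A[j, i−n] if j ≤ n < i; and B[i,j] = D[i−n, j−n] if i,j > n. Then max over i,i',j,j' ∈ [2n] with i ≤ i' and j ≤ j' of (B[i,j] + B[i',j'] − B[i,j'] − B[i',j]) equals (max over i,j,k ∈ [n] of (A[i,j] + A[j,k] + A[k,i])) + M' + M''. -/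
theorem stmt_0 (n : ℕ) (hn : 1 ≤ n) (M M' M'' : ℝ) (hM : 0 < M)
    (A : Fin n → Fin n → ℝ) (hA : ∀ i j, |A i j| ≤ M)
    (hM' : M' = 10 * M) (hM'' : M'' = 100 * M)
    (D : Fin n → Fin n → ℝ)
    (hD : ∀ i j, D i j = if i = j then M' + M'' else M'')
    (B : Fin (2 * n) → Fin (2 * n) → ℝ)
    (hB1 : ∀ (i j : Fin (2 * n)) (hi : i.val < n) (hj : j.val < n),
      B i j = A ⟨i.val, hi⟩ ⟨j.val, hj⟩)
    (hB2 : ∀ (i j : Fin (2 * n)) (hi : i.val < n) (hj : n ≤ j.val),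
      B i j = -A ⟨j.val - n, by have := j.isLt; omega⟩ ⟨i.val, hi⟩)
    (hB3 : ∀ (i j : Fin (2 * n)) (hi : n ≤ i.val) (hj : j.val < n),
      B i j = -A ⟨j.val, hj⟩ ⟨i.val - n, by have := i.isLt; omega⟩)
    (hB4 : ∀ (i j : Fin (2 * n)) (hi : n ≤ i.val) (hj : n ≤ j.val),
      B i j = D ⟨i.val - n, by have := i.isLt; omega⟩ ⟨j.val - n, by have := j.isLt; omega⟩) :
    sSup {x : ℝ | ∃ i i' j j' : Fin (2 * n), i ≤ i' ∧ j ≤ j' ∧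
        x = B i j + B i' j' - B i j' - B i' j}
      = sSup {x : ℝ | ∃ i j k : Fin n, x = A i j + A j k + A k i} + M' + M'' := by
  subst hM' hM''
  have h2n : 0 < 2 * n := by omega
  have habs : ∀ a b : Fin n, -M ≤ A a b ∧ A a b ≤ M := fun a b => abs_le.mp (hA a b)
  have hBA : ∀ a b : Fin (2*n), ((a:ℕ) < n ∨ (b:ℕ) < n) → |B a b| ≤ M := by
    intro a b hab
    rcases lt_or_ge (a:ℕ) n with ha | ha <;> rcases lt_or_ge (b:ℕ) n with hb | hb
    · rw [hB1 a b ha hb]; exact hA _ _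
    · rw [hB2 a b ha hb, abs_neg]; exact hA _ _
    · rw [hB3 a b ha hb, abs_neg]; exact hA _ _
    · omega
  have hBD : ∀ a b : Fin (2*n), n ≤ (a:ℕ) → n ≤ (b:ℕ) →
      100*M ≤ B a b ∧ B a b ≤ 10*M + 100*M := by
    intro a b ha hb
    rw [hB4 a b ha hb, hD]
    split <;> constructor <;> linarith
  have hBall : ∀ a b : Fin (2*n), -(10*M + 100*M) ≤ B a b ∧ B a b ≤ 10*M + 100*M := by
    intro a b
    rcases lt_or_ge (a:ℕ) n with ha | ha
    · have h := abs_le.mp (hBA a b (Or.inl ha))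
      exact ⟨by linarith [h.1], by linarith [h.2]⟩
    · rcases lt_or_ge (b:ℕ) n with hb | hb
      · have h := abs_le.mp (hBA a b (Or.inr hb))
        exact ⟨by linarith [h.1], by linarith [h.2]⟩
      · have h := hBD a b ha hb
        exact ⟨by linarith [h.1], h.2⟩
  set S1 := {x : ℝ | ∃ i i' j j' : Fin (2 * n), i ≤ i' ∧ j ≤ j' ∧
        x = B i j + B i' j' - B i j' - B i' j} with hS1
  set S2 := {x : ℝ | ∃ i j k : Fin n, x = A i j + A j k + A k i} with hS2
  have hne2 : S2.Nonempty := ⟨_, ⟨0, hn⟩, ⟨0, hn⟩, ⟨0, hn⟩, rfl⟩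
  have hbdd2 : BddAbove S2 := by
    refine ⟨3*M, ?_⟩
    rintro x ⟨a, b, c, rfl⟩
    linarith [(habs a b).2, (habs b c).2, (habs c a).2]
  have hTge : -(3*M) ≤ sSup S2 := by
    have hmem : A ⟨0, hn⟩ ⟨0, hn⟩ + A ⟨0, hn⟩ ⟨0, hn⟩ + A ⟨0, hn⟩ ⟨0, hn⟩ ∈ S2 :=
      ⟨⟨0, hn⟩, ⟨0, hn⟩, ⟨0, hn⟩, rfl⟩
    have := le_csSup hbdd2 hmem
    linarith [(habs ⟨0, hn⟩ ⟨0, hn⟩).1]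
  have hne1 : S1.Nonempty :=
    ⟨_, ⟨0, h2n⟩, ⟨0, h2n⟩, ⟨0, h2n⟩, ⟨0, h2n⟩, le_refl _, le_refl _, rfl⟩
  have hbdd1 : BddAbove S1 := by
    refine ⟨4*(10*M + 100*M), ?_⟩
    rintro x ⟨a, a', b, b', _, _, rfl⟩
    linarith [(hBall a b).2, (hBall a' b').2, (hBall a b').1, (hBall a' b).1]
  have bb := fun (a b : Fin (2*n)) h => abs_le.mp (hBA a b h)
  apply le_antisymm
  · refine csSup_le hne1 ?_
    rintro x ⟨i, i', j, j', hii, hjj, rfl⟩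
    have hii2 : (i:ℕ) ≤ (i':ℕ) := Fin.le_def.mp hii
    have hjj2 : (j:ℕ) ≤ (j':ℕ) := Fin.le_def.mp hjj
    rcases lt_or_ge ((i':Fin (2*n)):ℕ) n with hi' | hi'
    · have hi : (i:ℕ) < n := by omega
      linarith [(bb i j (Or.inl hi)).2, (bb i' j' (Or.inl hi')).2,
        (bb i j' (Or.inl hi)).1, (bb i' j (Or.inl hi')).1, hTge]
    · rcases lt_or_ge ((j':Fin (2*n)):ℕ) n with hj' | hj'
      · have hj : (j:ℕ) < n := by omega
        linarith [(bb i j (Or.inr hj)).2, (bb i' j' (Or.inr hj')).2,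
          (bb i j' (Or.inr hj')).1, (bb i' j (Or.inr hj)).1, hTge]
      · rcases lt_or_ge ((i:Fin (2*n)):ℕ) n with hi | hi
        · rcases lt_or_ge ((j:Fin (2*n)):ℕ) n with hj | hj
          · -- KEY case
            have hi'2 : (i':ℕ) < 2*n := i'.isLt
            have hj'2 : (j':ℕ) < 2*n := j'.isLt
            set a : Fin n := ⟨(i:ℕ), hi⟩ with ha
            set b : Fin n := ⟨(j:ℕ), hj⟩ with hb
            set c : Fin n := ⟨(i':ℕ) - n, by omega⟩ with hc
            set d : Fin n := ⟨(j':ℕ) - n, by omega⟩ with hd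
            have e1 : B i j = A a b := hB1 i j hi hj
            have e2 : B i' j' = D c d := hB4 i' j' hi' hj'
            have e3 : B i j' = -A d a := hB2 i j' hi hj'
            have e4 : B i' j = -A b c := hB3 i' j hi' hj
            rw [e1, e2, e3, e4]
            by_cases hcd : c = d
            · have hDval : D c d = 10*M + 100*M := by rw [hD, if_pos hcd]
              have htri : A a b + A b c + A c a ∈ S2 := ⟨a, b, c, rfl⟩
              have hle := le_csSup hbdd2 htri
              rw [hDval, ← hcd]
              linarith
            · have hDval : D c d = 100*M := by rw [hD, if_neg hcd]
              rw [hDval]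
              linarith [(habs a b).2, (habs d a).2, (habs b c).2, hTge]
          · linarith [(bb i j (Or.inl hi)).2, (hBD i' j' hi' hj').2,
              (bb i j' (Or.inl hi)).1, (hBD i' j hi' hj).1, hTge]
        · rcases lt_or_ge ((j:Fin (2*n)):ℕ) n with hj | hj
          · linarith [(bb i j (Or.inr hj)).2, (hBD i' j' hi' hj').2,
              (hBD i j' hi hj').1, (bb i' j (Or.inr hj)).1, hTge]
          · linarith [(hBD i j hi hj).2, (hBD i' j' hi' hj').2,
              (hBD i j' hi hj').1, (hBD i' j hi' hj).1, hTge]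
  · have step : ∀ x ∈ S2, x ≤ sSup S1 - 10*M - 100*M := by
      rintro x ⟨a, b, c, rfl⟩
      have h1 : (a:ℕ) < 2*n := by omega
      have h2 : (b:ℕ) < 2*n := by omega
      have h3 : n + (c:ℕ) < 2*n := by omega
      have hmem : A a b + A b c + A c a + (10*M) + (100*M) ∈ S1 := by
        refine ⟨⟨(a:ℕ), h1⟩, ⟨n + (c:ℕ), h3⟩, ⟨(b:ℕ), h2⟩, ⟨n + (c:ℕ), h3⟩,
          Fin.mk_le_mk.mpr (by omega), Fin.mk_le_mk.mpr (by omega), ?_⟩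
        have e1 : B ⟨(a:ℕ), h1⟩ ⟨(b:ℕ), h2⟩ = A a b := hB1 _ _ a.isLt b.isLt
        have e2 : B ⟨n + (c:ℕ), h3⟩ ⟨n + (c:ℕ), h3⟩ = D c c := by
          rw [hB4 _ _ (Nat.le_add_right n c) (Nat.le_add_right n c)]
          congr 1 <;> exact Fin.ext (by simp)
        have e3 : B ⟨(a:ℕ), h1⟩ ⟨n + (c:ℕ), h3⟩ = -A c a := by
          rw [hB2 _ _ a.isLt (Nat.le_add_right n c)]
          congr 1
          congr 1 <;> exact Fin.ext (by simp)
        have e4 : B ⟨n + (c:ℕ), h3⟩ ⟨(b:ℕ), h2⟩ = -A b c := by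
          rw [hB3 _ _ (Nat.le_add_right n c) b.isLt]
          congr 1
          congr 1 <;> exact Fin.ext (by simp)
        rw [e1, e2, e3, e4, hD, if_pos rfl]
        ring
      have := le_csSup hbdd1 hmem
      linarith
    have := csSup_le hne2 step
    linarith
end

section
/- Let m ≥ 2 and f : [m]×[m] → ℝ. Define C : [m−1]×[m−1] → ℝ by C[i,j] = f(i,j) + f(i+1,j+1) − f(i,j+1) − f(i+1,j). Then the maximum over all 1 ≤ i' ≤ i'' ≤ m−1 and 1 ≤ j' ≤ j'' ≤ m−1 of the subarray sum Σ_{i=i'}^{i''} Σ_{j=j'}^{j''} C[i,j] equals the maximum over all 1 ≤ i < i' ≤ m and 1 ≤ j < j' ≤ m of f(i,j) + f(i',j') − f(i,j') − f(i',j). -/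
/-!
`C` is the discrete mixed derivative of `f`, so a rectangle sum of `C` telescopes in both
directions to the mixed difference of `f` at the corners `(i', j')` and `(i'' + 1, j'' + 1)`.
Shifting the upper corner by one is a bijection between the two index ranges, hence the two sets
of values coincide, and so do their suprema.
-/

open Finset

def crossDiff {G : Type*} [AddCommGroup G] (f : ℕ → ℕ → G) (i i' j j' : ℕ) : G :=
  f i j + f i' j' - f i j' - f i' j

theorem sum_Icc_sum_Icc_crossDiff {G : Type*} [AddCommGroup G] (f : ℕ → ℕ → G) {a b c d : ℕ}
    (hab : a ≤ b) (hcd : c ≤ d) :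
    ∑ i ∈ Icc a b, ∑ j ∈ Icc c d, crossDiff f i (i + 1) j (j + 1)
      = crossDiff f a (b + 1) c (d + 1) := by
  have row (i : ℕ) : ∑ j ∈ Icc c d, crossDiff f i (i + 1) j (j + 1)
      = (f (i + 1) (d + 1) - f (i + 1) c) - (f i (d + 1) - f i c) :=
    calc ∑ j ∈ Icc c d, crossDiff f i (i + 1) j (j + 1)
        = ∑ j ∈ Icc c d, ((f (i + 1) (j + 1) - f i (j + 1)) - (f (i + 1) j - f i j)) :=
          sum_congr rfl fun j _ => by simp only [crossDiff]; abel
      _ = _ := by rw [sum_Icc_sub hcd (fun j => f (i + 1) j - f i j)]; abel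
  rw [sum_congr rfl fun i _ => row i, sum_Icc_sub hab (fun i => f i (d + 1) - f i c)]
  simp only [crossDiff]
  abel

theorem stmt_2_general (m : ℕ) (f : ℕ → ℕ → ℝ) (C : ℕ → ℕ → ℝ)
    (hC : ∀ i j : ℕ, 1 ≤ i → i ≤ m - 1 → 1 ≤ j → j ≤ m - 1 →
      C i j = f i j + f (i + 1) (j + 1) - f i (j + 1) - f (i + 1) j) :
    sSup {x : ℝ | ∃ i' i'' j' j'' : ℕ, 1 ≤ i' ∧ i' ≤ i'' ∧ i'' ≤ m - 1 ∧
        1 ≤ j' ∧ j' ≤ j'' ∧ j'' ≤ m - 1 ∧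
        x = ∑ i ∈ Finset.Icc i' i'', ∑ j ∈ Finset.Icc j' j'', C i j}
      = sSup {x : ℝ | ∃ i i' j j' : ℕ, 1 ≤ i ∧ i < i' ∧ i' ≤ m ∧ 1 ≤ j ∧ j < j' ∧ j' ≤ m ∧
          x = f i j + f i' j' - f i j' - f i' j} := by
  have rectangle_sum {a b c d : ℕ} (ha : 1 ≤ a) (hab : a ≤ b) (hb : b ≤ m - 1)
      (hc : 1 ≤ c) (hcd : c ≤ d) (hd : d ≤ m - 1) :
      ∑ i ∈ Icc a b, ∑ j ∈ Icc c d, C i j = crossDiff f a (b + 1) c (d + 1) := by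
    rw [← sum_Icc_sum_Icc_crossDiff f hab hcd]
    refine sum_congr rfl fun i hi => sum_congr rfl fun j hj => ?_
    rw [mem_Icc] at hi hj
    exact hC i j (by omega) (by omega) (by omega) (by omega)
  congr 1
  ext x
  constructor
  · rintro ⟨a, b, c, d, ha, hab, hb, hc, hcd, hd, rfl⟩
    exact ⟨a, b + 1, c, d + 1, ha, by omega, by omega, hc, by omega, by omega,
      rectangle_sum ha hab hb hc hcd hd⟩
  · rintro ⟨a, b, c, d, ha, hab, hb, hc, hcd, hd, rfl⟩
    obtain ⟨b, rfl⟩ : ∃ k, b = k + 1 := ⟨b - 1, by omega⟩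
    obtain ⟨d, rfl⟩ : ∃ k, d = k + 1 := ⟨d - 1, by omega⟩
    exact ⟨a, b, c, d, ha, by omega, by omega, hc, by omega, by omega,
      (rectangle_sum ha (by omega) (by omega) hc (by omega) (by omega)).symm⟩

theorem stmt_2 (m : ℕ) (hm : 2 ≤ m) (f : ℕ → ℕ → ℝ) (C : ℕ → ℕ → ℝ)
    (hC : ∀ i j : ℕ, 1 ≤ i → i ≤ m - 1 → 1 ≤ j → j ≤ m - 1 →
      C i j = f i j + f (i + 1) (j + 1) - f i (j + 1) - f (i + 1) j) :
    sSup {x : ℝ | ∃ i' i'' j' j'' : ℕ, 1 ≤ i' ∧ i' ≤ i'' ∧ i'' ≤ m - 1 ∧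
        1 ≤ j' ∧ j' ≤ j'' ∧ j'' ≤ m - 1 ∧
        x = ∑ i ∈ Finset.Icc i' i'', ∑ j ∈ Finset.Icc j' j'', C i j}
      = sSup {x : ℝ | ∃ i i' j j' : ℕ, 1 ≤ i ∧ i < i' ∧ i' ≤ m ∧ 1 ≤ j ∧ j < j' ∧ j' ≤ m ∧
          x = f i j + f i' j' - f i j' - f i' j} :=
  stmt_2_general m f C hC
end

section
/- Let d ≥ 2, m = ⌊d/2⌋, k = d+m, and n ≥ 1. Let G be a k-partite weighted graph with parts P_1,…,P_k, each identified with [n], with a symmetric real weight w(a,u;b,v) for every u ∈ P_a, v ∈ P_b, a ≠ b. Let W₀ be the maximum absolute value of the weights and M = 100·d^{10}·W₀. Construct a 2d-partite graph G' with parts V_1,…,V_d, V'_1,…,V'_d, each identified with [n], and edge weights w' given by: w'(V_a u, V_b v) = w(a,u;b,v) for 1 ≤ a < b ≤ d; w'(V_a u, V'_i v) = w(a,u; d+i, v) for a ∈ [d], i ∈ [m]; w'(V'_i u, V'_j v) = w(d+i,u; d+j,v) for 1 ≤ i < j ≤ m; w'(V'_i u, V'_{i+m} v) = 0 if u = v and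 −M otherwise, for i ∈ [m]; w'(V_i u, V'_{i+m} v) = w(i,u; d+i, v) for i ∈ [m]; and all other cross-part pairs have weight 0. Then the maximum over (u_1,…,u_k) ∈ [n]^k of the clique weight Σ_{1≤a<b≤k} w(a,u_a;b,u_b) in G equals the maximum over choices (v_1,…,v_d,v'_1,…,v'_d) ∈ [n]^{2d} of the 2d-subgraph value in G'. -/
open Classical in
/-- The `2d`-subgraph value of a choice `σ` of one vertex from each of the `2d` parts
`V_1, …, V_d, V'_1, …, V'_d` (encoded as `Fin d ⊕ Fin d`): the sum of the edge weights over
all unordered pairs of distinct chosen vertices, excluding the `d` matching pairs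
`(v_i, v'_i)`.  Each unordered pair is counted once: the weight function is symmetric, so
we sum over ordered pairs and halve. -/
noncomputable def subgraphValue (d n : ℕ)
    (w' : (Fin d ⊕ Fin d) → (Fin d ⊕ Fin d) → Fin n → Fin n → ℝ)
    (σ : (Fin d ⊕ Fin d) → Fin n) : ℝ :=
  (1 / 2) * ∑ p : Fin d ⊕ Fin d, ∑ q : Fin d ⊕ Fin d,
    if p ≠ q ∧ ¬ ∃ r : Fin d, (p = Sum.inl r ∧ q = Sum.inr r) ∨ (p = Sum.inr r ∧ q = Sum.inl r)
    then w' p q (σ p) (σ q) else 0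

/-!
Reading the parts `V_a` (`a < d`) and `V'_i` (`i < m`) of a choice in `G'` as the parts `a` and
`d + i` of `G` gives a clique of `G`. Its weight and the `2d`-subgraph value share every edge except
two per `i < m`: the clique edge between the parts `i` and `d + i` is the excluded pair
`(V_i, V'_i)` of `G'` and is carried there by `(V_i, V'_{i+m})` instead, and `G'` has the penalty
edge `(V'_i, V'_{i+m})`. So the `2d`-subgraph value is the clique weight plus a defect which
vanishes when each copy `V'_{i+m}` agrees with `V'_i`, and is at most `2 W₀ - M ≤ 0` otherwise.
Conversely, every clique arises from a choice whose copies agree.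
-/

open Finset

theorem Fintype.sum_sum_ite_ne_eq_two_nsmul {ι β : Type*} [Fintype ι] [LinearOrder ι]
    [AddCommMonoid β] (f : ι → ι → β) (hf : ∀ i j, f i j = f j i) :
    ∑ i, ∑ j, (if i ≠ j then f i j else 0) = 2 • ∑ i, ∑ j, if i < j then f i j else 0 := by
  have hsplit : ∀ i j, (if i ≠ j then f i j else 0)
      = (if i < j then f i j else 0) + if j < i then f j i else 0 := by
    intro i j
    rcases lt_trichotomy i j with h | rfl | h
    · simp [h, h.ne, h.not_gt]
    · simp
    · simp [h, h.ne', h.not_gt, hf i j]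
  simp only [hsplit, sum_add_distrib]
  rw [sum_comm (f := fun i j => if j < i then f j i else 0), two_nsmul]

theorem Fintype.sum_sum_ite_ne_eq_sub {ι G : Type*} [Fintype ι] [DecidableEq ι]
    [AddCommGroup G] (f : ι → ι → G) :
    ∑ i, ∑ j, (if j ≠ i then f i j else 0) = ∑ i, ∑ j, f i j - ∑ i, f i i := by
  rw [← sum_sub_distrib]
  refine Finset.sum_congr rfl fun i _ => ?_
  rw [← sum_filter, filter_ne', sum_erase_eq_sub (mem_univ i)]

theorem Fin.castLE_castAdd {m k d : ℕ} (h : m + k ≤ d) (i : Fin m) :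
    Fin.castLE h (Fin.castAdd k i) = Fin.castLE (Nat.le_of_add_right_le h) i :=
  rfl

theorem Fin.sum_ite_val_lt {β : Type*} [AddCommMonoid β] {m d : ℕ} (h : m ≤ d)
    (f : Fin d → β) :
    ∑ j : Fin d, (if j.val < m then f j else 0) = ∑ j : Fin m, f (Fin.castLE h j) := by
  obtain ⟨r, rfl⟩ := Nat.exists_eq_add_of_le h
  simp only [Fin.sum_univ_add, Fin.val_castAdd, Fin.is_lt, ↓reduceIte, Fin.val_natAdd,
    add_lt_iff_neg_left, Nat.not_lt_zero, sum_const_zero, add_zero]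
  rfl

theorem Fin.sum_sum_ite_val_lt_and_val_lt {β : Type*} [AddCommMonoid β] {m d : ℕ}
    (h : m ≤ d) (f : Fin d → Fin d → β) :
    ∑ i : Fin d, ∑ j : Fin d, (if i.val < m ∧ j.val < m then f i j else 0)
      = ∑ i : Fin m, ∑ j : Fin m, f (Fin.castLE h i) (Fin.castLE h j) := by
  simp only [ite_and, ← ite_sum_zero, Fin.sum_ite_val_lt h]

theorem Fin.sum_sum_ite_val_lt_and_val_eq_add {β : Type*} [AddCommMonoid β] {m d : ℕ}
    (h : m + m ≤ d) (f : Fin d → Fin d → β) :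
    ∑ i : Fin d, ∑ j : Fin d, (if i.val < m ∧ j.val = i.val + m then f i j else 0)
      = ∑ i : Fin m, f (Fin.castLE h (Fin.castAdd m i)) (Fin.castLE h (Fin.natAdd m i)) := by
  simp only [ite_and, ← ite_sum_zero]
  rw [Fin.sum_ite_val_lt (by omega)]
  refine sum_congr rfl fun i _ => ?_
  rw [sum_eq_single (Fin.castLE h (Fin.natAdd m i))]
  · exact if_pos (by simp [add_comm])
  · intro j _ hj
    exact if_neg fun hj' => hj (Fin.ext (by simp [hj', add_comm]))
  · simp

theorem csSup_setOf_eq_of_forall_exists_le {α β γ : Type*} [Finite α] [Finite β]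
    [Nonempty α] [Nonempty β] [ConditionallyCompleteLattice γ] (f : α → γ) (g : β → γ)
    (hfg : ∀ a, ∃ b, f a ≤ g b) (hgf : ∀ b, ∃ a, g b ≤ f a) :
    sSup {x | ∃ a, x = f a} = sSup {x | ∃ b, x = g b} := by
  have hf : {x | ∃ a, x = f a} = Set.range f := Set.ext fun _ => exists_congr fun _ => eq_comm
  have hg : {x | ∃ b, x = g b} = Set.range g := Set.ext fun _ => exists_congr fun _ => eq_comm
  rw [hf, hg]
  exact le_antisymm (ciSup_mono_of_forall_exists (Set.finite_range g).bddAbove hfg)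
    (ciSup_mono_of_forall_exists (Set.finite_range f).bddAbove hgf)

section

variable {n : ℕ}

def cliqueValue {k : ℕ} (w : ℕ → ℕ → Fin n → Fin n → ℝ) (u : Fin k → Fin n) : ℝ :=
  ∑ a : Fin k, ∑ b : Fin k, if a.val < b.val then w a.val b.val (u a) (u b) else 0

theorem cliqueValue_append {d m : ℕ} (w : ℕ → ℕ → Fin n → Fin n → ℝ) (x : Fin d → Fin n)
    (y : Fin m → Fin n) :
    cliqueValue w (Fin.append x y) =
      (∑ a : Fin d, ∑ b : Fin d, if a < b then w a b (x a) (x b) else 0)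
        + (∑ a : Fin d, ∑ j : Fin m, w a (d + j) (x a) (y j))
        + ∑ i : Fin m, ∑ j : Fin m, if i < j then w (d + i) (d + j) (y i) (y j) else 0 := by
  have hlr : ∀ (a : Fin d) (j : Fin m), a.val < d + j.val := fun a j => by omega
  have hrl : ∀ (i : Fin m) (b : Fin d), ¬ d + i.val < b.val := fun i b => by omega
  simp only [cliqueValue, Fin.sum_univ_add, Fin.append_left, Fin.append_right, Fin.val_castAdd,
    Fin.val_natAdd, hlr, hrl, if_true, if_false, sum_const_zero, add_zero,
    add_lt_add_iff_left, sum_add_distrib]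
  simp only [Fin.val_fin_lt]
  ring

theorem subgraphValue_eq_sum_blocks {d : ℕ}
    {w' : (Fin d ⊕ Fin d) → (Fin d ⊕ Fin d) → Fin n → Fin n → ℝ}
    (hw' : ∀ p q u v, w' p q u v = w' q p v u) (σ : (Fin d ⊕ Fin d) → Fin n) :
    subgraphValue d n w' σ =
      (∑ a : Fin d, ∑ b : Fin d,
          if a < b then w' (.inl a) (.inl b) (σ (.inl a)) (σ (.inl b)) else 0)
        + (∑ a : Fin d, ∑ j : Fin d,
          if j ≠ a then w' (.inl a) (.inr j) (σ (.inl a)) (σ (.inr j)) else 0)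
        + ∑ i : Fin d, ∑ j : Fin d,
          if i < j then w' (.inr i) (.inr j) (σ (.inr i)) (σ (.inr j)) else 0 := by
  have hcross : (∑ i : Fin d, ∑ b : Fin d,
        if b ≠ i then w' (.inr i) (.inl b) (σ (.inr i)) (σ (.inl b)) else 0)
      = ∑ a : Fin d, ∑ j : Fin d,
        if j ≠ a then w' (.inl a) (.inr j) (σ (.inl a)) (σ (.inr j)) else 0 := by
    rw [sum_comm]
    exact sum_congr rfl fun a _ => sum_congr rfl fun j _ => if_congr ne_comm (hw' _ _ _ _) rfl
  unfold subgraphValue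
  simp only [Fintype.sum_sum_type, ne_eq, reduceCtorEq, Sum.inl.injEq, Sum.inr.injEq,
    not_false_eq_true, true_and, and_false, false_or, or_false, not_exists, not_and,
    false_implies, implies_true, and_true, forall_eq', sum_add_distrib] at hcross ⊢
  simp only [← ne_eq]
  rw [hcross, Fintype.sum_sum_ite_ne_eq_two_nsmul _ fun a b => hw' (.inl a) (.inl b) _ _,
    Fintype.sum_sum_ite_ne_eq_two_nsmul _ fun i j => hw' (.inr i) (.inr j) _ _, two_nsmul,
    two_nsmul]
  ring

def cliqueChoice {d m : ℕ} (hmd : m + m ≤ d) (σ : (Fin d ⊕ Fin d) → Fin n) :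
    Fin (d + m) → Fin n :=
  Fin.append (fun a => σ (.inl a)) fun j => σ (.inr (Fin.castLE hmd (Fin.castAdd m j)))

def copyDefect {d m : ℕ} (w : ℕ → ℕ → Fin n → Fin n → ℝ) (M : ℝ) (hmd : m + m ≤ d)
    (σ : (Fin d ⊕ Fin d) → Fin n) : ℝ :=
  ∑ i : Fin m,
    (w i (d + i) (σ (.inl (Fin.castLE hmd (Fin.castAdd m i))))
        (σ (.inr (Fin.castLE hmd (Fin.natAdd m i))))
      - w i (d + i) (σ (.inl (Fin.castLE hmd (Fin.castAdd m i))))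
        (σ (.inr (Fin.castLE hmd (Fin.castAdd m i))))
      + if σ (.inr (Fin.castLE hmd (Fin.castAdd m i))) = σ (.inr (Fin.castLE hmd (Fin.natAdd m i)))
        then 0 else -M)

/-- `V_a` is `Sum.inl a` and plays part `a` of `G`; for `i < m`, `V'_i` is `Sum.inr i` and plays
part `d + i`, while `V'_{i+m}` is a copy of `V'_i` carrying the edge to `V_i`. -/
structure IsCliqueReduction (d m : ℕ) (w : ℕ → ℕ → Fin n → Fin n → ℝ) (M : ℝ)
    (w' : (Fin d ⊕ Fin d) → (Fin d ⊕ Fin d) → Fin n → Fin n → ℝ) : Prop where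
  symm : ∀ p q u v, w' p q u v = w' q p v u
  inl_inl : ∀ a b : Fin d, a.val < b.val → ∀ u v : Fin n,
    w' (Sum.inl a) (Sum.inl b) u v = w a.val b.val u v
  inl_inr_of_lt : ∀ a i : Fin d, i.val < m → ∀ u v : Fin n,
    w' (Sum.inl a) (Sum.inr i) u v = w a.val (d + i.val) u v
  inr_inr_of_lt : ∀ i j : Fin d, i.val < j.val → j.val < m → ∀ u v : Fin n,
    w' (Sum.inr i) (Sum.inr j) u v = w (d + i.val) (d + j.val) u v
  inr_inr_copy : ∀ i j : Fin d, i.val < m → j.val = i.val + m → ∀ u v : Fin n,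
    w' (Sum.inr i) (Sum.inr j) u v = if u = v then 0 else -M
  inl_inr_copy : ∀ a j : Fin d, a.val < m → j.val = a.val + m → ∀ u v : Fin n,
    w' (Sum.inl a) (Sum.inr j) u v = w a.val (d + a.val) u v
  inl_inr_of_le : ∀ a j : Fin d, m ≤ j.val → ¬(a.val < m ∧ j.val = a.val + m) → ∀ u v : Fin n,
    w' (Sum.inl a) (Sum.inr j) u v = 0
  inr_inr_of_le : ∀ i j : Fin d, i ≠ j → (m ≤ i.val ∨ m ≤ j.val) →
    ¬(i.val < m ∧ j.val = i.val + m) → ¬(j.val < m ∧ i.val = j.val + m) → ∀ u v : Fin n,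
    w' (Sum.inr i) (Sum.inr j) u v = 0

namespace IsCliqueReduction

variable {d m : ℕ} {w : ℕ → ℕ → Fin n → Fin n → ℝ} {M : ℝ}
  {w' : (Fin d ⊕ Fin d) → (Fin d ⊕ Fin d) → Fin n → Fin n → ℝ}

theorem inl_inr_eq (hR : IsCliqueReduction d m w M w') (a j : Fin d) (u v : Fin n) :
    w' (.inl a) (.inr j) u v = (if j.val < m then w a (d + j) u v else 0)
      + if a.val < m ∧ j.val = a.val + m then w a (d + a) u v else 0 := by
  by_cases hj : j.val < m
  · rw [hR.inl_inr_of_lt a j hj, if_pos hj, if_neg (by omega), add_zero]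
  by_cases hcopy : a.val < m ∧ j.val = a.val + m
  · rw [hR.inl_inr_copy a j hcopy.1 hcopy.2, if_neg hj, if_pos hcopy, zero_add]
  · rw [hR.inl_inr_of_le a j (by omega) hcopy, if_neg hj, if_neg hcopy, add_zero]

theorem ite_lt_inr_inr_eq (hR : IsCliqueReduction d m w M w') (i j : Fin d) (u v : Fin n) :
    (if i < j then w' (.inr i) (.inr j) u v else 0)
      = (if i.val < m ∧ j.val < m then (if i < j then w (d + i) (d + j) u v else 0) else 0)
        + if i.val < m ∧ j.val = i.val + m then (if u = v then 0 else -M) else 0 := by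
  by_cases hij : i < j
  swap
  · have hcopy : ¬(i.val < m ∧ j.val = i.val + m) := fun h => hij (Fin.lt_def.2 (by omega))
    simp [hij, hcopy]
  have hlt : i.val < j.val := hij
  rw [if_pos hij]
  by_cases hj : j.val < m
  · rw [hR.inr_inr_of_lt i j hij hj, if_pos ⟨by omega, hj⟩, if_pos hij, if_neg (by omega),
      add_zero]
  have hlow : ¬(i.val < m ∧ j.val < m) := fun h => hj h.2
  by_cases hcopy : i.val < m ∧ j.val = i.val + m
  · rw [hR.inr_inr_copy i j hcopy.1 hcopy.2, if_neg hlow, if_pos hcopy, zero_add]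
  · rw [hR.inr_inr_of_le i j hij.ne (by omega) hcopy (by omega), if_neg hlow, if_neg hcopy,
      add_zero]

theorem sum_inl_inr (hR : IsCliqueReduction d m w M w') (hmd : m + m ≤ d)
    (x y : Fin d → Fin n) :
    ∑ a : Fin d, ∑ j : Fin d, (if j ≠ a then w' (.inl a) (.inr j) (x a) (y j) else 0)
      = ∑ a : Fin d, ∑ j : Fin m, w a (d + j) (x a) (y (Fin.castLE hmd (Fin.castAdd m j)))
        + ∑ i : Fin m, (w i (d + i) (x (Fin.castLE hmd (Fin.castAdd m i)))
            (y (Fin.castLE hmd (Fin.natAdd m i)))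
          - w i (d + i) (x (Fin.castLE hmd (Fin.castAdd m i)))
            (y (Fin.castLE hmd (Fin.castAdd m i)))) := by
  have hdiag : ∀ a : Fin d, ¬(a.val < m ∧ a.val = a.val + m) := fun a => by omega
  simp only [hR.inl_inr_eq, Fintype.sum_sum_ite_ne_eq_sub, sum_add_distrib,
    Fin.sum_ite_val_lt (by omega : m ≤ d), Fin.sum_sum_ite_val_lt_and_val_eq_add hmd, hdiag,
    if_false, add_zero, Fin.castLE_castAdd, Fin.val_castLE, sum_sub_distrib]
  abel

theorem sum_inr_inr (hR : IsCliqueReduction d m w M w') (hmd : m + m ≤ d)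
    (y : Fin d → Fin n) :
    ∑ i : Fin d, ∑ j : Fin d, (if i < j then w' (.inr i) (.inr j) (y i) (y j) else 0)
      = ∑ i : Fin m, ∑ j : Fin m, (if i < j then w (d + i) (d + j)
          (y (Fin.castLE hmd (Fin.castAdd m i))) (y (Fin.castLE hmd (Fin.castAdd m j))) else 0)
        + ∑ i : Fin m, if y (Fin.castLE hmd (Fin.castAdd m i)) = y (Fin.castLE hmd (Fin.natAdd m i))
            then 0 else -M := by
  simp only [hR.ite_lt_inr_inr_eq, sum_add_distrib,
    Fin.sum_sum_ite_val_lt_and_val_lt (by omega : m ≤ d), Fin.sum_sum_ite_val_lt_and_val_eq_add hmd,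
    Fin.castLE_castAdd, Fin.val_castLE, Fin.castLE_lt_castLE_iff]

theorem subgraphValue_eq_cliqueValue_add (hR : IsCliqueReduction d m w M w') (hmd : m + m ≤ d)
    (σ : (Fin d ⊕ Fin d) → Fin n) :
    subgraphValue d n w' σ = cliqueValue w (cliqueChoice hmd σ) + copyDefect w M hmd σ := by
  rw [subgraphValue_eq_sum_blocks hR.symm, cliqueChoice, cliqueValue_append, copyDefect,
    hR.sum_inl_inr hmd, hR.sum_inr_inr hmd]
  have hll : ∀ a b : Fin d, (if a < b then w' (.inl a) (.inl b) (σ (.inl a)) (σ (.inl b)) else 0)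
      = if a < b then w a b (σ (.inl a)) (σ (.inl b)) else 0 := fun a b => by
    split_ifs with hab
    · exact hR.inl_inl a b hab _ _
    · rfl
  simp only [hll, sum_add_distrib, sum_sub_distrib]
  ring

theorem subgraphValue_le_cliqueValue (hR : IsCliqueReduction d m w M w') (hmd : m + m ≤ d)
    {W₀ : ℝ} (hw : ∀ i : Fin m, ∀ u v, |w i (d + i) u v| ≤ W₀)
    (hM : 2 * W₀ ≤ M) (σ : (Fin d ⊕ Fin d) → Fin n) :
    subgraphValue d n w' σ ≤ cliqueValue w (cliqueChoice hmd σ) := by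
  rw [hR.subgraphValue_eq_cliqueValue_add hmd, add_le_iff_nonpos_right]
  refine sum_nonpos fun i _ => ?_
  split_ifs with hcopy
  · rw [hcopy, sub_self, add_zero]
  · have h₁ := abs_le.1 (hw i (σ (.inl (Fin.castLE hmd (Fin.castAdd m i))))
      (σ (.inr (Fin.castLE hmd (Fin.natAdd m i)))))
    have h₂ := abs_le.1 (hw i (σ (.inl (Fin.castLE hmd (Fin.castAdd m i))))
      (σ (.inr (Fin.castLE hmd (Fin.castAdd m i)))))
    linarith [h₁.2, h₂.1]

theorem exists_subgraphValue_eq_cliqueValue (hR : IsCliqueReduction d m w M w') (hmd : m + m ≤ d)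
    (u : Fin (d + m) → Fin n) :
    ∃ σ, subgraphValue d n w' σ = cliqueValue w u := by
  let σ : (Fin d ⊕ Fin d) → Fin n := Sum.elim (fun a => u (Fin.castAdd m a)) fun j =>
    -- the parts `V'_j` with `2m ≤ j` are isolated, so any vertex does there
    if h : j.val < m then u (Fin.natAdd d ⟨j, h⟩)
    else if h' : j.val < m + m then u (Fin.natAdd d ⟨j - m, by omega⟩)
    else u (Fin.castAdd m j)
  have hlow : ∀ i : Fin m, σ (.inr (Fin.castLE hmd (Fin.castAdd m i))) = u (Fin.natAdd d i) :=
    fun i => dif_pos i.isLt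
  have hup : ∀ i : Fin m, σ (.inr (Fin.castLE hmd (Fin.natAdd m i))) = u (Fin.natAdd d i) := by
    intro i
    simp only [σ, Sum.elim_inr, Fin.val_castLE, Fin.val_natAdd]
    rw [dif_neg (by omega), dif_pos (by omega)]
    congr
    omega
  refine ⟨σ, ?_⟩
  have hchoice : cliqueChoice hmd σ = u := by
    simp only [cliqueChoice, hlow]
    exact Fin.append_castAdd_natAdd
  rw [hR.subgraphValue_eq_cliqueValue_add hmd, hchoice, copyDefect]
  simp only [hlow, hup, sub_self, if_true, add_zero, sum_const_zero]

end IsCliqueReduction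

end

theorem stmt_3_general (d n : ℕ) (hd : 2 ≤ d) (hn : 1 ≤ n)
    (m k : ℕ) (hm : m = d / 2) (hk : k = d + m)
    (w : ℕ → ℕ → Fin n → Fin n → ℝ)
    (W₀ M : ℝ)
    (hW₀ : IsGreatest {x : ℝ | ∃ (a b : ℕ) (u v : Fin n),
      a < k ∧ b < k ∧ a ≠ b ∧ x = |w a b u v|} W₀)
    (hM : M = 100 * (d : ℝ) ^ 10 * W₀)
    (w' : (Fin d ⊕ Fin d) → (Fin d ⊕ Fin d) → Fin n → Fin n → ℝ)
    (hw'symm : ∀ p q u v, w' p q u v = w' q p v u)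
    (h1 : ∀ a b : Fin d, a.val < b.val → ∀ u v : Fin n,
      w' (Sum.inl a) (Sum.inl b) u v = w a.val b.val u v)
    (h2 : ∀ a i : Fin d, i.val < m → ∀ u v : Fin n,
      w' (Sum.inl a) (Sum.inr i) u v = w a.val (d + i.val) u v)
    (h3 : ∀ i j : Fin d, i.val < j.val → j.val < m → ∀ u v : Fin n,
      w' (Sum.inr i) (Sum.inr j) u v = w (d + i.val) (d + j.val) u v)
    (h4 : ∀ i j : Fin d, i.val < m → j.val = i.val + m → ∀ u v : Fin n,
      w' (Sum.inr i) (Sum.inr j) u v = if u = v then 0 else -M)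
    (h5 : ∀ a j : Fin d, a.val < m → j.val = a.val + m → ∀ u v : Fin n,
      w' (Sum.inl a) (Sum.inr j) u v = w a.val (d + a.val) u v)
    (h6 : ∀ a j : Fin d, m ≤ j.val → ¬(a.val < m ∧ j.val = a.val + m) → ∀ u v : Fin n,
      w' (Sum.inl a) (Sum.inr j) u v = 0)
    (h7 : ∀ i j : Fin d, i ≠ j → (m ≤ i.val ∨ m ≤ j.val) →
      ¬(i.val < m ∧ j.val = i.val + m) → ¬(j.val < m ∧ i.val = j.val + m) → ∀ u v : Fin n,
      w' (Sum.inr i) (Sum.inr j) u v = 0) :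
    sSup {x : ℝ | ∃ u : Fin k → Fin n,
        x = ∑ a : Fin k, ∑ b : Fin k, if a.val < b.val then w a.val b.val (u a) (u b) else 0}
      = sSup {x : ℝ | ∃ σ : (Fin d ⊕ Fin d) → Fin n, x = subgraphValue d n w' σ} := by
  subst hk
  have hmd : m + m ≤ d := by omega
  have hR : IsCliqueReduction d m w M w' := ⟨hw'symm, h1, h2, h3, h4, h5, h6, h7⟩
  obtain ⟨⟨_, _, _, _, -, -, -, hW₀eq⟩, hW₀max⟩ := hW₀
  have hw : ∀ i : Fin m, ∀ u v, |w i (d + i) u v| ≤ W₀ :=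
    fun i u v => hW₀max ⟨i, d + i, u, v, by omega, by omega, by omega, rfl⟩
  have hM2 : 2 * W₀ ≤ M := by
    have hW₀nonneg : 0 ≤ W₀ := hW₀eq ▸ abs_nonneg _
    have hd10 : (1 : ℝ) ≤ (d : ℝ) ^ 10 := one_le_pow₀ (by exact_mod_cast (by omega : 1 ≤ d))
    rw [hM]
    nlinarith
  have : Nonempty (Fin n) := ⟨⟨0, hn⟩⟩
  exact csSup_setOf_eq_of_forall_exists_le (cliqueValue w) (subgraphValue d n w')
    (fun u => (hR.exists_subgraphValue_eq_cliqueValue hmd u).imp fun _ h => h.ge)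
    (fun σ => ⟨_, hR.subgraphValue_le_cliqueValue hmd hw hM2 σ⟩)

/-- Parts of the `k`-partite graph `G` are indexed by natural numbers `0, …, k-1`
(only indices `< k` are relevant for the weight function `w`). -/
theorem stmt_3 (d n : ℕ) (hd : 2 ≤ d) (hn : 1 ≤ n)
    (m k : ℕ) (hm : m = d / 2) (hk : k = d + m)
    (w : ℕ → ℕ → Fin n → Fin n → ℝ)
    (hwsymm : ∀ a b u v, w a b u v = w b a v u)
    (W₀ M : ℝ)
    (hW₀ : IsGreatest {x : ℝ | ∃ (a b : ℕ) (u v : Fin n),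
      a < k ∧ b < k ∧ a ≠ b ∧ x = |w a b u v|} W₀)
    (hM : M = 100 * (d : ℝ) ^ 10 * W₀)
    (w' : (Fin d ⊕ Fin d) → (Fin d ⊕ Fin d) → Fin n → Fin n → ℝ)
    (hw'symm : ∀ p q u v, w' p q u v = w' q p v u)
    (h1 : ∀ a b : Fin d, a.val < b.val → ∀ u v : Fin n,
      w' (Sum.inl a) (Sum.inl b) u v = w a.val b.val u v)
    (h2 : ∀ a i : Fin d, i.val < m → ∀ u v : Fin n,
      w' (Sum.inl a) (Sum.inr i) u v = w a.val (d + i.val) u v)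
    (h3 : ∀ i j : Fin d, i.val < j.val → j.val < m → ∀ u v : Fin n,
      w' (Sum.inr i) (Sum.inr j) u v = w (d + i.val) (d + j.val) u v)
    (h4 : ∀ i j : Fin d, i.val < m → j.val = i.val + m → ∀ u v : Fin n,
      w' (Sum.inr i) (Sum.inr j) u v = if u = v then 0 else -M)
    (h5 : ∀ a j : Fin d, a.val < m → j.val = a.val + m → ∀ u v : Fin n,
      w' (Sum.inl a) (Sum.inr j) u v = w a.val (d + a.val) u v)
    (h6 : ∀ a j : Fin d, m ≤ j.val → ¬(a.val < m ∧ j.val = a.val + m) → ∀ u v : Fin n,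
      w' (Sum.inl a) (Sum.inr j) u v = 0)
    (h7 : ∀ i j : Fin d, i ≠ j → (m ≤ i.val ∨ m ≤ j.val) →
      ¬(i.val < m ∧ j.val = i.val + m) → ¬(j.val < m ∧ i.val = j.val + m) → ∀ u v : Fin n,
      w' (Sum.inr i) (Sum.inr j) u v = 0) :
    sSup {x : ℝ | ∃ u : Fin k → Fin n,
        x = ∑ a : Fin k, ∑ b : Fin k, if a.val < b.val then w a.val b.val (u a) (u b) else 0}
      = sSup {x : ℝ | ∃ σ : (Fin d ⊕ Fin d) → Fin n, x = subgraphValue d n w' σ} :=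
  stmt_3_general d n hd hn m k hm hk w W₀ M hW₀ hM w' hw'symm h1 h2 h3 h4 h5 h6 h7
end

section
/- Let d ≥ 2 and n ≥ 1. Let w be a real edge-weight function on pairs of vertices from distinct parts of a 2d-partite graph with parts V_1,…,V_d,V'_1,…,V'_d, each identified with [n]. Let M' be any real number and let A be the central array in d dimensions of side-length 2n+1 defined by: A[x] = −M' if x_r = 0 for some r ∈ [d]; otherwise A[x] = Σ_{1≤r<t≤d} w(z_r, z_t), where z_r is the (−x_r)-th vertex of V_r if x_r < 0 and the x_r-th vertex of V'_r if x_r > 0. Then for every i ∈ [n]^d and every d-tuple δ with 0 < δ_r − i_r ≤ n for all r ∈ [d], Σ_{j ∈ B_d} A[−i + δ×j] = 2^{d−2} · S, where S is the 2d-subgraph value of the choice u_r = i_r-th vertex of V_r and u'_r = (δ_r − i_r)-th vertex of V'_r. -/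
private lemma card_ne_pair {d : ℕ} (r t : Fin d) (hrt : r ≠ t) :
    Fintype.card {x : Fin d // x ≠ r ∧ x ≠ t} = d - 2 := by
  classical
  rw [Fintype.card_subtype]
  have h1 : (Finset.univ.filter fun x : Fin d => x ≠ r ∧ x ≠ t)
      = Finset.univ \ {r, t} := by
    ext x; simp [not_or, and_comm]
  rw [h1, Finset.card_sdiff_of_subset (by simp), Finset.card_pair hrt, Finset.card_univ,
    Fintype.card_fin]

private lemma sum_pair {d : ℕ} (r t : Fin d) (hrt : r ≠ t) (g : Fin 2 → Fin 2 → ℝ) :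
    ∑ j : Fin d → Fin 2, g (j r) (j t)
      = 2 ^ (d - 2) * ∑ a : Fin 2, ∑ b : Fin 2, g a b := by
  classical
  let E : (Fin d → Fin 2) ≃ Fin 2 × Fin 2 × ({x : Fin d // x ≠ r ∧ x ≠ t} → Fin 2) :=
  { toFun := fun j => (j r, j t, fun x => j x.1)
    invFun := fun p x => if hx : x = r then p.1 else if hx' : x = t then p.2.1
      else p.2.2 ⟨x, hx, hx'⟩
    left_inv := fun j => by
      funext x
      by_cases hx : x = r
      · subst hx; simp
      · by_cases hx' : x = t
        · subst hx'; simp [hx]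
        · simp [hx, hx']
    right_inv := fun p => by
      obtain ⟨a, b, h⟩ := p
      refine Prod.ext ?_ (Prod.ext ?_ ?_)
      · simp
      · simp [hrt.symm]
      · funext x
        simp [x.2.1, x.2.2] }
  rw [Fintype.sum_equiv E (fun j => g (j r) (j t)) (fun p => g p.1 p.2.1) (fun j => rfl)]
  rw [Fintype.sum_prod_type]
  have hc : Fintype.card ({x : Fin d // x ≠ r ∧ x ≠ t} → Fin 2) = 2 ^ (d - 2) := by
    rw [Fintype.card_fun, Fintype.card_fin, card_ne_pair r t hrt]
  rw [Finset.mul_sum]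
  refine Finset.sum_congr rfl fun a _ => ?_
  simp only [Fintype.sum_prod_type]
  rw [Finset.mul_sum]
  refine Finset.sum_congr rfl fun b _ => ?_
  rw [Finset.sum_const, Finset.card_univ, hc, nsmul_eq_mul]
  push_cast
  ring

private lemma sum_ne_eq_two {d : ℕ} (f : Fin d → Fin d → ℝ) (hf : ∀ r t, f r t = f t r) :
    ∑ r : Fin d, ∑ t : Fin d, (if r ≠ t then f r t else 0)
      = 2 * ∑ r : Fin d, ∑ t : Fin d, (if r.val < t.val then f r t else 0) := by
  have key : ∀ r t : Fin d, (if r ≠ t then f r t else 0)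
      = (if r.val < t.val then f r t else 0) + (if t.val < r.val then f r t else 0) := by
    intro r t
    rcases lt_trichotomy r.val t.val with h | h | h
    · have hne : r ≠ t := fun e => absurd (congrArg Fin.val e) (by omega)
      rw [if_pos hne, if_pos h, if_neg (by omega)]; ring
    · have : r = t := Fin.ext h
      simp [this]
    · have hne : r ≠ t := fun e => absurd (congrArg Fin.val e) (by omega)
      rw [if_pos hne, if_neg (by omega), if_pos h]; ring
  simp only [key, Finset.sum_add_distrib]
  have swap : ∑ r : Fin d, ∑ t : Fin d, (if t.val < r.val then f r t else 0)
      = ∑ r : Fin d, ∑ t : Fin d, (if r.val < t.val then f r t else 0) := by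
    rw [Finset.sum_comm]
    exact Finset.sum_congr rfl fun r _ => Finset.sum_congr rfl fun t _ => by
      by_cases h : r.val < t.val <;> simp [h, hf r t]
  rw [swap]; ring

open Classical in
theorem stmt_4 (d n : ℕ) (hd : 2 ≤ d) (hn : 1 ≤ n) (M' : ℝ)
    (w : (Fin d ⊕ Fin d) → ℤ → (Fin d ⊕ Fin d) → ℤ → ℝ)
    (hwsymm : ∀ p u q v, w p u q v = w q v p u)
    (A : (Fin d → ℤ) → ℝ)
    (hA0 : ∀ x : Fin d → ℤ, (∀ r, |x r| ≤ (n : ℤ)) → (∃ r, x r = 0) → A x = -M')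
    (hA1 : ∀ x : Fin d → ℤ, (∀ r, |x r| ≤ (n : ℤ)) → (∀ r, x r ≠ 0) →
      A x = ∑ r : Fin d, ∑ t : Fin d, if r.val < t.val then
        w (if x r < 0 then Sum.inl r else Sum.inr r) |x r|
          (if x t < 0 then Sum.inl t else Sum.inr t) |x t| else 0)
    (i δ : Fin d → ℤ) (hi : ∀ r, 1 ≤ i r ∧ i r ≤ (n : ℤ))
    (hδ : ∀ r, 0 < δ r - i r ∧ δ r - i r ≤ (n : ℤ)) :
    ∑ j : Fin d → Fin 2, A (fun r => -i r + δ r * ((j r).val : ℤ))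
      = 2 ^ (d - 2) * ((1 / 2) * ∑ p : Fin d ⊕ Fin d, ∑ q : Fin d ⊕ Fin d,
          if p ≠ q ∧
              ¬ ∃ r : Fin d, (p = Sum.inl r ∧ q = Sum.inr r) ∨ (p = Sum.inr r ∧ q = Sum.inl r)
          then w p (Sum.elim (fun r => i r) (fun r => δ r - i r) p)
                 q (Sum.elim (fun r => i r) (fun r => δ r - i r) q) else 0) := by
  classical
  set F : Fin d → Fin 2 → (Fin d ⊕ Fin d) :=
    fun r a => if a = 0 then Sum.inl r else Sum.inr r with hF
  set V : Fin d → Fin 2 → ℤ := fun r a => if a = 0 then i r else δ r - i r with hV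
  set X : Fin d → Fin d → ℝ := fun r t => ∑ a : Fin 2, ∑ b : Fin 2,
    w (F r a) (V r a) (F t b) (V t b) with hX
  -- Step A: evaluate A at each point of the cube
  have stepA : ∀ j : Fin d → Fin 2,
      A (fun r => -i r + δ r * ((j r).val : ℤ))
        = ∑ r : Fin d, ∑ t : Fin d, (if r.val < t.val then
            w (F r (j r)) (V r (j r)) (F t (j t)) (V t (j t)) else 0) := by
    intro j
    have key : ∀ r : Fin d,
        ((if (-i r + δ r * ((j r).val : ℤ)) < 0 then (Sum.inl r : Fin d ⊕ Fin d)
            else Sum.inr r) = F r (j r))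
        ∧ |(-i r + δ r * ((j r).val : ℤ))| = V r (j r)
        ∧ |(-i r + δ r * ((j r).val : ℤ))| ≤ (n : ℤ)
        ∧ (-i r + δ r * ((j r).val : ℤ)) ≠ 0 := by
      intro r
      obtain ⟨h1, h2⟩ := hi r
      obtain ⟨h3, h4⟩ := hδ r
      obtain hjr | hjr : j r = 0 ∨ j r = 1 := by omega
      · rw [hjr]
        simp only [hF, hV, Fin.val_zero, Nat.cast_zero, mul_zero, add_zero, if_pos rfl]
        refine ⟨by rw [if_pos (by omega)], by rw [abs_of_neg (by omega)]; ring, ?_, by omega⟩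
        rw [abs_of_neg (by omega)]; omega
      · rw [hjr]
        have hv : ((1 : Fin 2).val : ℤ) = 1 := by norm_num
        rw [hv]
        have hne : (1 : Fin 2) ≠ 0 := by decide
        simp only [hF, hV, if_neg hne]
        refine ⟨by rw [if_neg (by omega)], by rw [abs_of_pos (by omega)]; ring, ?_, by omega⟩
        rw [abs_of_pos (by omega)]; omega
    rw [hA1 _ (fun r => (key r).2.2.1) (fun r => (key r).2.2.2)]
    refine Finset.sum_congr rfl fun r _ => Finset.sum_congr rfl fun t _ => ?_
    by_cases h : r.val < t.val
    · rw [if_pos h, if_pos h, (key r).1, (key r).2.1, (key t).1, (key t).2.1]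
    · rw [if_neg h, if_neg h]
  -- Step B: LHS equals 2^(d-2) * sum over r<t of X r t
  have hLHS : ∑ j : Fin d → Fin 2, A (fun r => -i r + δ r * ((j r).val : ℤ))
      = 2 ^ (d - 2) * ∑ r : Fin d, ∑ t : Fin d, (if r.val < t.val then X r t else 0) := by
    calc ∑ j : Fin d → Fin 2, A (fun r => -i r + δ r * ((j r).val : ℤ))
        = ∑ j : Fin d → Fin 2, ∑ r : Fin d, ∑ t : Fin d, (if r.val < t.val then
            w (F r (j r)) (V r (j r)) (F t (j t)) (V t (j t)) else 0) :=
          Finset.sum_congr rfl fun j _ => stepA j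
      _ = ∑ r : Fin d, ∑ t : Fin d, ∑ j : Fin d → Fin 2, (if r.val < t.val then
            w (F r (j r)) (V r (j r)) (F t (j t)) (V t (j t)) else 0) := by
          rw [Finset.sum_comm]
          exact Finset.sum_congr rfl fun r _ => Finset.sum_comm
      _ = ∑ r : Fin d, ∑ t : Fin d, (if r.val < t.val then 2 ^ (d - 2) * X r t else 0) := by
          refine Finset.sum_congr rfl fun r _ => Finset.sum_congr rfl fun t _ => ?_
          by_cases h : r.val < t.val
          · simp only [if_pos h]
            exact sum_pair r t (fun e => absurd (congrArg Fin.val e) (by omega))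
              (fun a b => w (F r a) (V r a) (F t b) (V t b))
          · simp [h]
      _ = 2 ^ (d - 2) * ∑ r : Fin d, ∑ t : Fin d, (if r.val < t.val then X r t else 0) := by
          rw [Finset.mul_sum]
          refine Finset.sum_congr rfl fun r _ => ?_
          rw [Finset.mul_sum]
          refine Finset.sum_congr rfl fun t _ => ?_
          by_cases h : r.val < t.val <;> simp [h]
  -- Step C: RHS inner sum equals sum over r ≠ t of X r t
  have hXexp : ∀ r t : Fin d, X r t =
      ((w (Sum.inl r) (i r) (Sum.inl t) (i t)
        + w (Sum.inl r) (i r) (Sum.inr t) (δ t - i t))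
      + (w (Sum.inr r) (δ r - i r) (Sum.inl t) (i t)
        + w (Sum.inr r) (δ r - i r) (Sum.inr t) (δ t - i t))) := by
    intro r t
    simp [hX, hF, hV, Fin.sum_univ_two]
  have hS : (∑ p : Fin d ⊕ Fin d, ∑ q : Fin d ⊕ Fin d,
          if p ≠ q ∧
              ¬ ∃ r : Fin d, (p = Sum.inl r ∧ q = Sum.inr r) ∨ (p = Sum.inr r ∧ q = Sum.inl r)
          then w p (Sum.elim (fun r => i r) (fun r => δ r - i r) p)
                 q (Sum.elim (fun r => i r) (fun r => δ r - i r) q) else 0)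
      = ∑ r : Fin d, ∑ t : Fin d, (if r ≠ t then X r t else 0) := by
    simp only [Fintype.sum_sum_type, Sum.elim_inl, Sum.elim_inr]
    rw [← Finset.sum_add_distrib]
    refine Finset.sum_congr rfl fun r _ => ?_
    rw [← Finset.sum_add_distrib, ← Finset.sum_add_distrib, ← Finset.sum_add_distrib]
    refine Finset.sum_congr rfl fun t _ => ?_
    rw [hXexp]
    by_cases h : r = t
    · simp [h]
    · simp [h, Ne.symm h]
  have hXsymm : ∀ r t : Fin d, X r t = X t r := by
    intro r t
    rw [hXexp, hXexp]
    rw [hwsymm (Sum.inl r) (i r) (Sum.inl t) (i t),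
        hwsymm (Sum.inl r) (i r) (Sum.inr t) (δ t - i t),
        hwsymm (Sum.inr r) (δ r - i r) (Sum.inl t) (i t),
        hwsymm (Sum.inr r) (δ r - i r) (Sum.inr t) (δ t - i t)]
    ring
  rw [hLHS, hS, sum_ne_eq_two X hXsymm]
  ring
end

section
/- Let d ≥ 2 and n ≥ 1. Let w be a real edge-weight function on pairs of vertices from distinct parts of a 2d-partite graph with parts V_1,…,V_d,V'_1,…,V'_d, each identified with [n], let W' be the maximum absolute value of the edge weights, and set M' = 100^{10d}·W'. Let A be the central array in d dimensions of side-length 2n+1 defined by: A[x] = −M' if x_r = 0 for some r ∈ [d]; otherwise A[x] = Σ_{1≤r<t≤d} w(z_r, z_t), where z_r is the (−x_r)-th vertex of V_r if x_r < 0 and the x_r-th vertex of V'_r if x_r > 0. Then the maximum over i ∈ [n]^d and δ ∈ [2n]^d with 0 ≤ δ_r − i_r ≤ n for all r of Σ_{j ∈ B_d} A[−i + δ×j] equals 2^{d−2} times the maximum, over all choices of one vertex from each of the 2d parts, of the 2d-subgraph value. -/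
/-!
Write `σ = (i, δ - i)` for a choice of one vertex in each of the `2d` parts. If `δ_r > i_r` for
every `r`, no corner `-i + δ × j` of the box has a zero coordinate, its `r`-th coordinate selects
the vertex `σ` of `V_r` (if `j_r = 0`) or of `V'_r` (if `j_r = 1`), and `A` at the corner is the
weight of the `d` selected vertices. For columns `r < t` each of the four vertex pairs between
them is selected by exactly `2^(d-2)` corners, so the corner sum is `2^(d-2)` times the
`2d`-subgraph value of `σ`, and every `σ` arises in this way. If `δ_r = i_r` for some `r`, half
of the corners lie on the hyperplane `x_r = 0`, where `A = -M'`, while the other half contribute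
at most `d² W'` each; as `M' ≥ 5 d² W'`, this falls below `2^(d-2) (-4 d² W')`, a lower bound
for `2^(d-2)` times any subgraph value.
-/

open Finset

section FunSum

variable {ι β M : Type*} [Fintype ι] [DecidableEq ι] [Fintype β] [AddCommMonoid M]

theorem sum_fun_apply (s : ι) (G : β → M) :
    ∑ j : ι → β, G (j s) = Fintype.card β ^ (Fintype.card ι - 1) • ∑ b, G b := by
  rw [← (Equiv.funSplitAt s β).symm.sum_comp, Fintype.sum_prod_type, Finset.smul_sum]
  simp [Fintype.card_subtype_compl]

theorem sum_fun_apply_apply {r t : ι} (hrt : r ≠ t) (F : β → β → M) :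
    ∑ j : ι → β, F (j r) (j t) = Fintype.card β ^ (Fintype.card ι - 2) • ∑ a, ∑ b, F a b := by
  rw [← (Equiv.funSplitAt r β).symm.sum_comp, Fintype.sum_prod_type, Finset.smul_sum]
  refine Finset.sum_congr rfl fun a _ => ?_
  simpa [Fintype.card_subtype_compl, Nat.sub_sub, hrt.symm] using
    sum_fun_apply (⟨t, hrt.symm⟩ : {j // j ≠ r}) (F a)

theorem sum_fun_sum_ite_lt [LinearOrder ι] (F : ι → ι → β → β → M) :
    ∑ j : ι → β, ∑ r, ∑ t, (if r < t then F r t (j r) (j t) else 0) =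
      Fintype.card β ^ (Fintype.card ι - 2) •
        ∑ r, ∑ t, if r < t then ∑ a, ∑ b, F r t a b else 0 := by
  rw [Finset.sum_comm, Finset.smul_sum]
  refine Finset.sum_congr rfl fun r _ => ?_
  rw [Finset.sum_comm, Finset.smul_sum]
  refine Finset.sum_congr rfl fun t _ => ?_
  split_ifs with hrt
  · exact sum_fun_apply_apply hrt.ne (F r t)
  · simp

end FunSum

theorem sum_ite_ne_eq_two_nsmul {ι M : Type*} [Fintype ι] [LinearOrder ι] [AddCommMonoid M]
    (H : ι → ι → M) (hH : ∀ r t, H r t = H t r) :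
    ∑ r, ∑ t, (if r = t then 0 else H r t) = 2 • ∑ r, ∑ t, if r < t then H r t else 0 := by
  have hsplit : ∀ r t, (if r = t then 0 else H r t) =
      (if r < t then H r t else 0) + (if t < r then H t r else 0) := by
    intro r t
    rcases lt_trichotomy r t with h | rfl | h
    · simp [h, h.ne, h.not_gt]
    · simp
    · simp [h, h.ne', h.not_gt, hH r t]
  simp only [hsplit, sum_add_distrib, two_nsmul]
  rw [Finset.sum_comm (f := fun r t => if t < r then H t r else 0)]

theorem five_mul_sq_le_hundred_pow (d : ℕ) : 5 * d ^ 2 ≤ 100 ^ (10 * d) := by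
  rcases Nat.eq_zero_or_pos d with rfl | hd
  · simp
  have hsq : d ^ 2 ≤ 4 ^ d := by
    rw [show 4 ^ d = (2 ^ d) ^ 2 by rw [← pow_mul, mul_comm, pow_mul]; norm_num]
    exact Nat.pow_le_pow_left d.lt_two_pow_self.le 2
  calc 5 * d ^ 2 ≤ 100 * 4 ^ d := by omega
    _ ≤ 100 * 100 ^ d := Nat.mul_le_mul_left _ (Nat.pow_le_pow_left (by norm_num) _)
    _ = 100 ^ (d + 1) := (pow_succ' _ _).symm
    _ ≤ 100 ^ (10 * d) := Nat.pow_le_pow_right (by norm_num) (by omega)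

theorem exists_max_on_box {α β : Type*} [Fintype α] [DecidableEq α] [LinearOrder β]
    (f : (α → ℤ) → β) {a b : ℤ} (hab : a ≤ b) :
    ∃ σ : α → ℤ, (∀ p, a ≤ σ p ∧ σ p ≤ b) ∧ ∀ τ : α → ℤ, (∀ p, a ≤ τ p ∧ τ p ≤ b) → f τ ≤ f σ := by
  obtain ⟨σ, hσ, hmax⟩ := (Fintype.piFinset fun _ : α => Icc a b).exists_max_image f
    (Fintype.piFinset_nonempty.2 fun _ => nonempty_Icc.2 hab)
  simp only [Fintype.mem_piFinset, mem_Icc] at hσ hmax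
  exact ⟨σ, hσ, hmax⟩

namespace CentralArray

variable {d n : ℕ}

/-- The parts `V_r` and `V'_r` of the paper are `Sum.inl r` and `Sum.inr r`; a corner `j` of a
box meets the part `part r (j r)` in column `r`. -/
def part (r : Fin d) (a : Fin 2) : Fin d ⊕ Fin d := if a = 0 then .inl r else .inr r

theorem sum_sum_eq_sum_part {M : Type*} [AddCommMonoid M] (f : Fin d ⊕ Fin d → M) :
    ∑ p, f p = ∑ r, ∑ a : Fin 2, f (part r a) := by
  simp [Fintype.sum_sum_type, Fin.sum_univ_two, part, sum_add_distrib]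

theorem part_nonMatching_iff (r t : Fin d) (a b : Fin 2) :
    (part r a ≠ part t b ∧ ¬ ∃ s, (part r a = .inl s ∧ part t b = .inr s) ∨
      (part r a = .inr s ∧ part t b = .inl s)) ↔ r ≠ t := by
  fin_cases a <;> fin_cases b <;> simp [part, eq_comm]

def columnWeight (w : (Fin d ⊕ Fin d) → ℤ → (Fin d ⊕ Fin d) → ℤ → ℝ) (σ : Fin d ⊕ Fin d → ℤ)
    (r t : Fin d) : ℝ :=
  ∑ a : Fin 2, ∑ b : Fin 2, w (part r a) (σ (part r a)) (part t b) (σ (part t b))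

def subgraphValue (w : (Fin d ⊕ Fin d) → ℤ → (Fin d ⊕ Fin d) → ℤ → ℝ) (σ : Fin d ⊕ Fin d → ℤ) :
    ℝ :=
  ∑ r, ∑ t, if r < t then columnWeight w σ r t else 0

theorem half_sum_eq_subgraphValue {w : (Fin d ⊕ Fin d) → ℤ → (Fin d ⊕ Fin d) → ℤ → ℝ}
    (hw : ∀ p u q v, w p u q v = w q v p u) (σ : Fin d ⊕ Fin d → ℤ) :
    (1 / 2) * ∑ p : Fin d ⊕ Fin d, ∑ q : Fin d ⊕ Fin d,
      (if p ≠ q ∧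
          ¬ ∃ r : Fin d, (p = Sum.inl r ∧ q = Sum.inr r) ∨ (p = Sum.inr r ∧ q = Sum.inl r)
        then w p (σ p) q (σ q) else 0) = subgraphValue w σ := by
  have hsymm : ∀ r t, columnWeight w σ r t = columnWeight w σ t r := by
    intro r t
    rw [columnWeight, columnWeight, Finset.sum_comm]
    simp only [hw]
  have hsum : ∑ p : Fin d ⊕ Fin d, ∑ q : Fin d ⊕ Fin d,
      (if p ≠ q ∧
          ¬ ∃ r : Fin d, (p = Sum.inl r ∧ q = Sum.inr r) ∨ (p = Sum.inr r ∧ q = Sum.inl r)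
        then w p (σ p) q (σ q) else 0) =
      ∑ r, ∑ t, if r = t then 0 else columnWeight w σ r t := by
    simp only [sum_sum_eq_sum_part, part_nonMatching_iff, ite_not, columnWeight]
    refine sum_congr rfl fun r _ => ?_
    rw [sum_comm]
    refine sum_congr rfl fun t _ => ?_
    split_ifs <;> simp
  rw [hsum, sum_ite_ne_eq_two_nsmul _ hsymm, subgraphValue, two_nsmul]
  ring

theorem isGreatest_halfSums {w : (Fin d ⊕ Fin d) → ℤ → (Fin d ⊕ Fin d) → ℤ → ℝ}
    (hw : ∀ p u q v, w p u q v = w q v p u) {σ : Fin d ⊕ Fin d → ℤ}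
    (hσ : ∀ p, 1 ≤ σ p ∧ σ p ≤ (n : ℤ))
    (hmax : ∀ τ : Fin d ⊕ Fin d → ℤ, (∀ p, 1 ≤ τ p ∧ τ p ≤ (n : ℤ)) →
      subgraphValue w τ ≤ subgraphValue w σ) :
    IsGreatest {x : ℝ | ∃ σ : (Fin d ⊕ Fin d) → ℤ,
        (∀ p, 1 ≤ σ p ∧ σ p ≤ (n : ℤ)) ∧
        x = (1 / 2) * ∑ p : Fin d ⊕ Fin d, ∑ q : Fin d ⊕ Fin d,
          if p ≠ q ∧
              ¬ ∃ r : Fin d, (p = Sum.inl r ∧ q = Sum.inr r) ∨ (p = Sum.inr r ∧ q = Sum.inl r)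
          then w p (σ p) q (σ q) else 0}
      (subgraphValue w σ) := by
  refine ⟨⟨σ, hσ, (half_sum_eq_subgraphValue hw σ).symm⟩, ?_⟩
  rintro x ⟨τ, hτ, rfl⟩
  rw [half_sum_eq_subgraphValue hw]
  exact hmax τ hτ

theorem corner_coord_eq (i δ : ℤ) (a : Fin 2) :
    -i + δ * (a.val : ℤ) = if a = 0 then -i else δ - i := by
  fin_cases a <;> simp [neg_add_eq_sub]

theorem corner_lt_zero_iff {i δ : ℤ} (hi : 0 < i) (hiδ : i < δ) (a : Fin 2) :
    -i + δ * (a.val : ℤ) < 0 ↔ a = 0 := by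
  rw [corner_coord_eq]
  split_ifs with ha
  · exact iff_of_true (by omega) ha
  · exact iff_of_false (by omega) ha

theorem corner_ne_zero {i δ : ℤ} (hi : 0 < i) (hiδ : i < δ) (a : Fin 2) :
    -i + δ * (a.val : ℤ) ≠ 0 := by
  rw [corner_coord_eq]
  split_ifs <;> omega

theorem abs_corner_le {i δ : ℤ} {n : ℕ} (hi : 0 ≤ i ∧ i ≤ n) (hδ : 0 ≤ δ - i ∧ δ - i ≤ n)
    (a : Fin 2) : |-i + δ * (a.val : ℤ)| ≤ n := by
  rw [corner_coord_eq, abs_le]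
  split_ifs <;> omega

theorem abs_corner_eq_elim_part {i δ : Fin d → ℤ} {r : Fin d} (hi : 0 ≤ i r) (hiδ : i r ≤ δ r)
    (a : Fin 2) : |-i r + δ r * (a.val : ℤ)| = Sum.elim i (δ - i) (part r a) := by
  rw [corner_coord_eq]
  split_ifs with ha <;> simp [part, ha, abs_of_nonneg, hi, hiδ]

def cornerSum (A : (Fin d → ℤ) → ℝ) (i δ : Fin d → ℤ) : ℝ :=
  ∑ j : Fin d → Fin 2, A (fun r => -i r + δ r * ((j r).val : ℤ))

def IsWeightBound (n : ℕ) (w : (Fin d ⊕ Fin d) → ℤ → (Fin d ⊕ Fin d) → ℤ → ℝ) (W : ℝ) : Prop :=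
  ∀ p q u v, p ≠ q → 1 ≤ u → u ≤ (n : ℤ) → 1 ≤ v → v ≤ (n : ℤ) → |w p u q v| ≤ W

section Array

variable {w : (Fin d ⊕ Fin d) → ℤ → (Fin d ⊕ Fin d) → ℤ → ℝ} {W' M' : ℝ}
  {A : (Fin d → ℤ) → ℝ}

theorem neg_le_columnWeight (hW : IsWeightBound n w W') {σ : Fin d ⊕ Fin d → ℤ}
    (hσ : ∀ p, 1 ≤ σ p ∧ σ p ≤ (n : ℤ)) {r t : Fin d} (hrt : r ≠ t) :
    -(4 * W') ≤ columnWeight w σ r t := by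
  calc -(4 * W') = ∑ _a : Fin 2, ∑ _b : Fin 2, -W' := by simp only [sum_const, card_univ, Fintype.card_fin, nsmul_eq_mul]; ring
    _ ≤ columnWeight w σ r t := sum_le_sum fun a _ => sum_le_sum fun b _ =>
      neg_le_of_abs_le (hW _ _ _ _ ((part_nonMatching_iff r t a b).2 hrt).1
        (hσ _).1 (hσ _).2 (hσ _).1 (hσ _).2)

theorem neg_le_subgraphValue (hW : IsWeightBound n w W') (hW0 : 0 ≤ W')
    {σ : Fin d ⊕ Fin d → ℤ} (hσ : ∀ p, 1 ≤ σ p ∧ σ p ≤ (n : ℤ)) :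
    -(4 * d ^ 2 * W') ≤ subgraphValue w σ := by
  calc -(4 * d ^ 2 * W') = ∑ _r : Fin d, ∑ _t : Fin d, -(4 * W') := by simp only [sum_const, card_univ, Fintype.card_fin, nsmul_eq_mul]; ring
    _ ≤ subgraphValue w σ := sum_le_sum fun r _ => sum_le_sum fun t _ => by
      split_ifs with hrt
      · exact neg_le_columnWeight hW hσ hrt.ne
      · linarith

variable (hA1 : ∀ x : Fin d → ℤ, (∀ r, |x r| ≤ (n : ℤ)) → (∀ r, x r ≠ 0) →
    A x = ∑ r : Fin d, ∑ t : Fin d, if r.val < t.val then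
      w (if x r < 0 then Sum.inl r else Sum.inr r) |x r|
        (if x t < 0 then Sum.inl t else Sum.inr t) |x t| else 0)
include hA1

theorem cornerSum_eq_subgraphValue {i δ : Fin d → ℤ} (hi : ∀ r, 1 ≤ i r ∧ i r ≤ (n : ℤ))
    (hδ : ∀ r, 1 ≤ δ r - i r ∧ δ r - i r ≤ (n : ℤ)) :
    cornerSum A i δ = 2 ^ (d - 2) * subgraphValue w (Sum.elim i (δ - i)) := by
  set σ := Sum.elim i (δ - i)
  have hpos : ∀ r, 0 < i r := fun r => (hi r).1
  have hlt : ∀ r, i r < δ r := fun r => by linarith [(hδ r).1]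
  have hside : ∀ r (a : Fin 2),
      (if -i r + δ r * (a.val : ℤ) < 0 then Sum.inl r else Sum.inr r) = part r a := fun r a =>
    if_congr (corner_lt_zero_iff (hpos r) (hlt r) a) rfl rfl
  have habs : ∀ r (a : Fin 2), |-i r + δ r * (a.val : ℤ)| = σ (part r a) := fun r a =>
    abs_corner_eq_elim_part (hpos r).le (hlt r).le a
  have hcorner : ∀ j : Fin d → Fin 2, A (fun r => -i r + δ r * ((j r).val : ℤ)) =
      ∑ r, ∑ t, if r < t then
        w (part r (j r)) (σ (part r (j r))) (part t (j t)) (σ (part t (j t))) else 0 := by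
    intro j
    rw [hA1 _ (fun r => abs_corner_le ⟨(hpos r).le, (hi r).2⟩ ⟨by linarith [(hδ r).1], (hδ r).2⟩ _)
      (fun r => corner_ne_zero (hpos r) (hlt r) _)]
    simp only [hside, habs, Fin.val_fin_lt]
  rw [cornerSum, sum_congr rfl fun j _ => hcorner j,
    sum_fun_sum_ite_lt fun r t a b => w (part r a) (σ (part r a)) (part t b) (σ (part t b))]
  simp [subgraphValue, columnWeight]

variable (hA0 : ∀ x : Fin d → ℤ, (∀ r, |x r| ≤ (n : ℤ)) → (∃ r, x r = 0) → A x = -M')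
include hA0

theorem apply_le_sq_mul (hW : IsWeightBound n w W') (hW0 : 0 ≤ W') (hM0 : 0 ≤ M')
    {x : Fin d → ℤ} (hx : ∀ r, |x r| ≤ (n : ℤ)) : A x ≤ d ^ 2 * W' := by
  by_cases hzero : ∃ r, x r = 0
  · rw [hA0 x hx hzero]
    linarith [mul_nonneg (sq_nonneg (d : ℝ)) hW0]
  push Not at hzero
  rw [hA1 x hx hzero]
  calc _ ≤ ∑ _r : Fin d, ∑ _t : Fin d, W' := sum_le_sum fun r _ => sum_le_sum fun t _ => by
        by_cases hrt : r.val < t.val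
        · have hne : (if x r < 0 then Sum.inl r else Sum.inr r) ≠
              (if x t < 0 then Sum.inl t else Sum.inr t) := by
            split_ifs <;> simp [Fin.ne_of_val_ne hrt.ne]
          rw [if_pos hrt]
          exact (le_abs_self _).trans (hW _ _ _ _ hne (Int.one_le_abs (hzero r)) (hx r)
            (Int.one_le_abs (hzero t)) (hx t))
        · rwa [if_neg hrt]
    _ = d ^ 2 * W' := by simp only [sum_const, card_univ, Fintype.card_fin, nsmul_eq_mul]; ring

theorem cornerSum_le_of_eq (hW : IsWeightBound n w W') (hW0 : 0 ≤ W') (hM0 : 0 ≤ M')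
    {i δ : Fin d → ℤ} (hi : ∀ r, 0 ≤ i r ∧ i r ≤ (n : ℤ))
    (hδ : ∀ r, 0 ≤ δ r - i r ∧ δ r - i r ≤ (n : ℤ)) {r₀ : Fin d} (h : δ r₀ = i r₀) :
    cornerSum A i δ ≤ 2 ^ (d - 1) * (d ^ 2 * W' - M') := by
  set bound : Fin 2 → ℝ := fun a => if a = 0 then d ^ 2 * W' else -M'
  have hcorner : ∀ j : Fin d → Fin 2,
      A (fun r => -i r + δ r * ((j r).val : ℤ)) ≤ bound (j r₀) := by
    intro j
    have hbox : ∀ r, |-i r + δ r * ((j r).val : ℤ)| ≤ n := fun r => abs_corner_le (hi r) (hδ r) _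
    by_cases hj : j r₀ = 0
    · simpa [bound, hj] using apply_le_sq_mul hA1 hA0 hW hW0 hM0 hbox
    · refine (hA0 _ hbox ⟨r₀, ?_⟩).le.trans (by simp [bound, hj])
      simp [Fin.eq_one_of_ne_zero _ hj, h]
  calc cornerSum A i δ ≤ ∑ j : Fin d → Fin 2, bound (j r₀) := sum_le_sum fun j _ => hcorner j
    _ = 2 ^ (d - 1) * (d ^ 2 * W' - M') := by
      rw [sum_fun_apply, Fin.sum_univ_two]
      simp only [bound, Fintype.card_fin, Fin.isValue, ↓reduceIte, one_ne_zero, nsmul_eq_mul,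
        Nat.cast_pow, Nat.cast_ofNat]
      ring

theorem cornerSum_le (hW : IsWeightBound n w W') (hW0 : 0 ≤ W') (hM : 5 * d ^ 2 * W' ≤ M')
    {σ : Fin d ⊕ Fin d → ℤ} (hσ : ∀ p, 1 ≤ σ p ∧ σ p ≤ (n : ℤ))
    (hmax : ∀ τ : Fin d ⊕ Fin d → ℤ, (∀ p, 1 ≤ τ p ∧ τ p ≤ (n : ℤ)) →
      subgraphValue w τ ≤ subgraphValue w σ)
    {i δ : Fin d → ℤ} (hi : ∀ r, 1 ≤ i r ∧ i r ≤ (n : ℤ))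
    (hδ : ∀ r, 0 ≤ δ r - i r ∧ δ r - i r ≤ (n : ℤ)) :
    cornerSum A i δ ≤ 2 ^ (d - 2) * subgraphValue w σ := by
  by_cases hdeg : ∃ r, δ r = i r
  · obtain ⟨r₀, h⟩ := hdeg
    have hdW : 0 ≤ (d : ℝ) ^ 2 * W' := by positivity
    calc cornerSum A i δ
        ≤ 2 ^ (d - 1) * (d ^ 2 * W' - M') :=
          cornerSum_le_of_eq hA1 hA0 hW hW0 (by linarith) (fun r => ⟨by linarith [(hi r).1], (hi r).2⟩)
            hδ h
      _ ≤ 2 ^ (d - 2) * (d ^ 2 * W' - M') :=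
          mul_le_mul_of_nonpos_right (pow_le_pow_right₀ one_le_two (by omega)) (by linarith)
      _ ≤ 2 ^ (d - 2) * subgraphValue w σ := by
          gcongr
          linarith [neg_le_subgraphValue hW hW0 hσ]
  · push Not at hdeg
    have hδ' : ∀ r, 1 ≤ δ r - i r ∧ δ r - i r ≤ (n : ℤ) := fun r =>
      ⟨by have := (hδ r).1; have := hdeg r; omega, (hδ r).2⟩
    rw [cornerSum_eq_subgraphValue hA1 hi hδ']
    gcongr
    exact hmax _ fun | .inl r => hi r | .inr r => hδ' r

theorem isGreatest_cornerSums (hW : IsWeightBound n w W') (hW0 : 0 ≤ W')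
    (hM : 5 * d ^ 2 * W' ≤ M') {σ : Fin d ⊕ Fin d → ℤ} (hσ : ∀ p, 1 ≤ σ p ∧ σ p ≤ (n : ℤ))
    (hmax : ∀ τ : Fin d ⊕ Fin d → ℤ, (∀ p, 1 ≤ τ p ∧ τ p ≤ (n : ℤ)) →
      subgraphValue w τ ≤ subgraphValue w σ) :
    IsGreatest {x : ℝ | ∃ i δ : Fin d → ℤ,
        (∀ r, 1 ≤ i r ∧ i r ≤ (n : ℤ)) ∧ (∀ r, 1 ≤ δ r ∧ δ r ≤ 2 * (n : ℤ)) ∧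
        (∀ r, 0 ≤ δ r - i r ∧ δ r - i r ≤ (n : ℤ)) ∧ x = cornerSum A i δ}
      (2 ^ (d - 2) * subgraphValue w σ) := by
  have hdiff : ∀ r, 1 ≤ (σ ∘ .inl + σ ∘ .inr) r - (σ ∘ .inl) r ∧
      (σ ∘ .inl + σ ∘ .inr) r - (σ ∘ .inl) r ≤ (n : ℤ) := fun r => by simpa using hσ (.inr r)
  refine ⟨⟨σ ∘ .inl, σ ∘ .inl + σ ∘ .inr, fun r => hσ _, fun r => ?_,
    fun r => ⟨by linarith [(hdiff r).1], (hdiff r).2⟩, ?_⟩, ?_⟩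
  · have := hσ (.inl r)
    have := hσ (.inr r)
    simp only [Pi.add_apply, Function.comp_apply]
    omega
  · rw [cornerSum_eq_subgraphValue hA1 (i := σ ∘ .inl) (fun r => hσ _) hdiff]
    congr 2
    ext (r | r) <;> simp
  · rintro x ⟨i, δ, hi, -, hδ, rfl⟩
    exact cornerSum_le hA1 hA0 hW hW0 hM hσ hmax hi hδ

end Array

end CentralArray

open CentralArray

open Classical in
theorem stmt_5_general (d n : ℕ) (hn : 1 ≤ n)
    (w : (Fin d ⊕ Fin d) → ℤ → (Fin d ⊕ Fin d) → ℤ → ℝ)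
    (hwsymm : ∀ p u q v, w p u q v = w q v p u)
    (W' M' : ℝ)
    (hW' : IsGreatest {x : ℝ | ∃ (p q : Fin d ⊕ Fin d) (u v : ℤ), p ≠ q ∧
        1 ≤ u ∧ u ≤ (n : ℤ) ∧ 1 ≤ v ∧ v ≤ (n : ℤ) ∧ x = |w p u q v|} W')
    (hM' : M' = 100 ^ (10 * d) * W')
    (A : (Fin d → ℤ) → ℝ)
    (hA0 : ∀ x : Fin d → ℤ, (∀ r, |x r| ≤ (n : ℤ)) → (∃ r, x r = 0) → A x = -M')
    (hA1 : ∀ x : Fin d → ℤ, (∀ r, |x r| ≤ (n : ℤ)) → (∀ r, x r ≠ 0) →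
      A x = ∑ r : Fin d, ∑ t : Fin d, if r.val < t.val then
        w (if x r < 0 then Sum.inl r else Sum.inr r) |x r|
          (if x t < 0 then Sum.inl t else Sum.inr t) |x t| else 0) :
    sSup {x : ℝ | ∃ i δ : Fin d → ℤ,
        (∀ r, 1 ≤ i r ∧ i r ≤ (n : ℤ)) ∧ (∀ r, 1 ≤ δ r ∧ δ r ≤ 2 * (n : ℤ)) ∧
        (∀ r, 0 ≤ δ r - i r ∧ δ r - i r ≤ (n : ℤ)) ∧
        x = ∑ j : Fin d → Fin 2, A (fun r => -i r + δ r * ((j r).val : ℤ))}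
      = 2 ^ (d - 2) * sSup {x : ℝ | ∃ σ : (Fin d ⊕ Fin d) → ℤ,
          (∀ p, 1 ≤ σ p ∧ σ p ≤ (n : ℤ)) ∧
          x = (1 / 2) * ∑ p : Fin d ⊕ Fin d, ∑ q : Fin d ⊕ Fin d,
            if p ≠ q ∧
                ¬ ∃ r : Fin d, (p = Sum.inl r ∧ q = Sum.inr r) ∨ (p = Sum.inr r ∧ q = Sum.inl r)
            then w p (σ p) q (σ q) else 0} := by
  have hW : IsWeightBound n w W' := fun p q u v hpq hu hu' hv hv' =>
    hW'.2 ⟨p, q, u, v, hpq, hu, hu', hv, hv', rfl⟩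
  have hW0 : 0 ≤ W' := by
    obtain ⟨_, _, _, _, -, -, -, -, -, hW'_eq⟩ := hW'.1
    exact hW'_eq ▸ abs_nonneg _
  have hM : 5 * d ^ 2 * W' ≤ M' := hM' ▸ mul_le_mul_of_nonneg_right
    (by exact_mod_cast five_mul_sq_le_hundred_pow d) hW0
  obtain ⟨σ, hσ, hmax⟩ := exists_max_on_box (subgraphValue w) (by exact_mod_cast hn : (1 : ℤ) ≤ n)
  rw [(isGreatest_halfSums hwsymm hσ hmax).csSup_eq]
  exact (isGreatest_cornerSums hA1 hA0 hW hW0 hM hσ hmax).csSup_eq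

open Classical in
theorem stmt_5 (d n : ℕ) (hd : 2 ≤ d) (hn : 1 ≤ n)
    (w : (Fin d ⊕ Fin d) → ℤ → (Fin d ⊕ Fin d) → ℤ → ℝ)
    (hwsymm : ∀ p u q v, w p u q v = w q v p u)
    (W' M' : ℝ)
    (hW' : IsGreatest {x : ℝ | ∃ (p q : Fin d ⊕ Fin d) (u v : ℤ), p ≠ q ∧
        1 ≤ u ∧ u ≤ (n : ℤ) ∧ 1 ≤ v ∧ v ≤ (n : ℤ) ∧ x = |w p u q v|} W')
    (hM' : M' = 100 ^ (10 * d) * W')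
    (A : (Fin d → ℤ) → ℝ)
    (hA0 : ∀ x : Fin d → ℤ, (∀ r, |x r| ≤ (n : ℤ)) → (∃ r, x r = 0) → A x = -M')
    (hA1 : ∀ x : Fin d → ℤ, (∀ r, |x r| ≤ (n : ℤ)) → (∀ r, x r ≠ 0) →
      A x = ∑ r : Fin d, ∑ t : Fin d, if r.val < t.val then
        w (if x r < 0 then Sum.inl r else Sum.inr r) |x r|
          (if x t < 0 then Sum.inl t else Sum.inr t) |x t| else 0) :
    sSup {x : ℝ | ∃ i δ : Fin d → ℤ,
        (∀ r, 1 ≤ i r ∧ i r ≤ (n : ℤ)) ∧ (∀ r, 1 ≤ δ r ∧ δ r ≤ 2 * (n : ℤ)) ∧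
        (∀ r, 0 ≤ δ r - i r ∧ δ r - i r ≤ (n : ℤ)) ∧
        x = ∑ j : Fin d → Fin 2, A (fun r => -i r + δ r * ((j r).val : ℤ))}
      = 2 ^ (d - 2) * sSup {x : ℝ | ∃ σ : (Fin d ⊕ Fin d) → ℤ,
          (∀ p, 1 ≤ σ p ∧ σ p ≤ (n : ℤ)) ∧
          x = (1 / 2) * ∑ p : Fin d ⊕ Fin d, ∑ q : Fin d ⊕ Fin d,
            if p ≠ q ∧
                ¬ ∃ r : Fin d, (p = Sum.inl r ∧ q = Sum.inr r) ∨ (p = Sum.inr r ∧ q = Sum.inl r)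
            then w p (σ p) q (σ q) else 0} :=
  stmt_5_general d n hn w hwsymm W' M' hW' hM' A hA0 hA1
end

section
/- Let d, n ≥ 1, let A be a central array in d dimensions of side-length 2n+1, let W'' be the maximum of |A[x]| over all x, and set M'' = 100^{10d}·W''. Define A' by A'[x] = A[x] + M'' if x_r < 0 for all r ∈ [d], and A'[x] = A[x] otherwise. Then the maximum over i ∈ [n]^d and δ ∈ [2n]^d with δ_r ≤ n + i_r for all r of Σ_{j ∈ B_d} (−1)^{‖j‖₁} · A'[−i + δ×j] equals M'' plus the maximum over i ∈ [n]^d and δ ∈ [2n]^d with i_r ≤ δ_r ≤ n + i_r for all r of Σ_{j ∈ B_d} (−1)^{‖j‖₁} · A[−i + δ×j]. -/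
lemma key_sum (d : ℕ) (P : Fin d → Prop) [DecidablePred P] :
    ∑ j : Fin d → Fin 2, (-1 : ℝ) ^ (∑ r, (j r).val) *
      (if ∀ r, ((j r).val = 0 ∨ P r) then (1:ℝ) else 0)
    = if ∀ r, ¬ P r then 1 else 0 := by
  classical
  have h1 : ∀ j : Fin d → Fin 2,
      (-1 : ℝ) ^ (∑ r, (j r).val) * (if ∀ r, ((j r).val = 0 ∨ P r) then (1:ℝ) else 0)
      = ∏ r, ((-1:ℝ) ^ ((j r).val) * (if ((j r).val = 0 ∨ P r) then (1:ℝ) else 0)) := by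
    intro j
    rw [Finset.prod_mul_distrib, Finset.prod_pow_eq_pow_sum, Finset.prod_boole]
    simp
  rw [Finset.sum_congr rfl (fun j _ => h1 j),
    ← Fintype.prod_sum (fun (r : Fin d) (b : Fin 2) =>
      ((-1:ℝ) ^ (b.val) * (if (b.val = 0 ∨ P r) then (1:ℝ) else 0)))]
  have h2 : ∀ r : Fin d, (∑ b : Fin 2, ((-1:ℝ) ^ (b.val) * (if (b.val = 0 ∨ P r) then (1:ℝ) else 0)))
      = if ¬ P r then 1 else 0 := by
    intro r
    rw [Fin.sum_univ_two]
    by_cases h : P r <;> simp [h]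
  rw [Finset.prod_congr rfl (fun r _ => h2 r), Finset.prod_boole]
  simp

lemma pointwise_lem (d n : ℕ) (A A' : (Fin d → ℤ) → ℝ) (M'' : ℝ)
    (hA' : ∀ x : Fin d → ℤ, (∀ r, |x r| ≤ (n : ℤ)) →
      A' x = if ∀ r, x r < 0 then A x + M'' else A x)
    (i δ : Fin d → ℤ)
    (hi : ∀ r, 1 ≤ i r ∧ i r ≤ (n : ℤ)) (hδ : ∀ r, 1 ≤ δ r ∧ δ r ≤ 2 * (n : ℤ))
    (hδ2 : ∀ r, δ r ≤ (n : ℤ) + i r) :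
    ∑ j : Fin d → Fin 2, (-1 : ℝ) ^ (∑ r, (j r).val) *
        A' (fun r => -i r + δ r * ((j r).val : ℤ))
    = (∑ j : Fin d → Fin 2, (-1 : ℝ) ^ (∑ r, (j r).val) *
        A (fun r => -i r + δ r * ((j r).val : ℤ)))
      + (if ∀ r, i r ≤ δ r then M'' else 0) := by
  classical
  have hbound : ∀ (j : Fin d → Fin 2) (r : Fin d),
      |(-i r + δ r * ((j r).val : ℤ))| ≤ (n : ℤ) := by
    intro j r
    have h1 := (hi r).1; have h2 := (hi r).2
    have h3 := (hδ r).1; have h4 := hδ2 r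
    have hv : (j r).val = 0 ∨ (j r).val = 1 := by omega
    rcases hv with hv | hv <;> rw [hv] <;> push_cast <;> rw [abs_le] <;> constructor <;> omega
  have hAj : ∀ j : Fin d → Fin 2,
      A' (fun r => -i r + δ r * ((j r).val : ℤ))
      = A (fun r => -i r + δ r * ((j r).val : ℤ))
        + (if ∀ r, ((j r).val = 0 ∨ δ r < i r) then M'' else 0) := by
    intro j
    rw [hA' _ (hbound j)]
    have hiff : (∀ r, (-i r + δ r * ((j r).val : ℤ)) < 0) ↔
        (∀ r, ((j r).val = 0 ∨ δ r < i r)) := by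
      apply forall_congr'
      intro r
      have h1 := (hi r).1; have h3 := (hδ r).1
      have hv : (j r).val = 0 ∨ (j r).val = 1 := by omega
      rcases hv with hv | hv
      · rw [hv]; push_cast
        simp only [mul_zero, add_zero, true_or, iff_true]
        omega
      · rw [hv]; push_cast
        simp only [mul_one, false_or]
        omega
    by_cases h : ∀ r, ((j r).val = 0 ∨ δ r < i r)
    · rw [if_pos (hiff.mpr h), if_pos h]
    · rw [if_neg (fun hc => h (hiff.mp hc)), if_neg h, add_zero]
  calc ∑ j : Fin d → Fin 2, (-1 : ℝ) ^ (∑ r, (j r).val) *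
        A' (fun r => -i r + δ r * ((j r).val : ℤ))
      = ∑ j : Fin d → Fin 2, ((-1 : ℝ) ^ (∑ r, (j r).val) *
          A (fun r => -i r + δ r * ((j r).val : ℤ))
        + (-1 : ℝ) ^ (∑ r, (j r).val) *
          (if ∀ r, ((j r).val = 0 ∨ δ r < i r) then M'' else 0)) := by
        apply Finset.sum_congr rfl; intro j _; rw [hAj j]; ring
    _ = (∑ j : Fin d → Fin 2, (-1 : ℝ) ^ (∑ r, (j r).val) *
          A (fun r => -i r + δ r * ((j r).val : ℤ)))
        + ∑ j : Fin d → Fin 2, (-1 : ℝ) ^ (∑ r, (j r).val) *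
          (if ∀ r, ((j r).val = 0 ∨ δ r < i r) then M'' else 0) := Finset.sum_add_distrib
    _ = (∑ j : Fin d → Fin 2, (-1 : ℝ) ^ (∑ r, (j r).val) *
          A (fun r => -i r + δ r * ((j r).val : ℤ)))
        + (if ∀ r, i r ≤ δ r then M'' else 0) := by
        congr 1
        have : ∀ j : Fin d → Fin 2,
            (-1 : ℝ) ^ (∑ r, (j r).val) *
              (if ∀ r, ((j r).val = 0 ∨ δ r < i r) then M'' else 0)
            = M'' * ((-1 : ℝ) ^ (∑ r, (j r).val) *
              (if ∀ r, ((j r).val = 0 ∨ δ r < i r) then (1:ℝ) else 0)) := by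
          intro j; by_cases h : ∀ r, ((j r).val = 0 ∨ δ r < i r) <;> simp [h] <;> ring
        rw [Finset.sum_congr rfl (fun j _ => this j), ← Finset.mul_sum,
          key_sum d (fun r => δ r < i r)]
        have : (∀ r, ¬ δ r < i r) ↔ (∀ r, i r ≤ δ r) := by
          apply forall_congr'; intro r; omega
        by_cases h : ∀ r, i r ≤ δ r
        · rw [if_pos (this.mpr h), if_pos h, mul_one]
        · rw [if_neg (fun hc => h (this.mp hc)), if_neg h, mul_zero]

lemma bound_lem (d n : ℕ) (A : (Fin d → ℤ) → ℝ) (W'' : ℝ)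
    (hW : ∀ x : Fin d → ℤ, (∀ r, |x r| ≤ (n : ℤ)) → |A x| ≤ W'')
    (i δ : Fin d → ℤ)
    (hi : ∀ r, 1 ≤ i r ∧ i r ≤ (n : ℤ)) (hδ : ∀ r, 1 ≤ δ r ∧ δ r ≤ 2 * (n : ℤ))
    (hδ2 : ∀ r, δ r ≤ (n : ℤ) + i r) :
    |∑ j : Fin d → Fin 2, (-1 : ℝ) ^ (∑ r, (j r).val) *
        A (fun r => -i r + δ r * ((j r).val : ℤ))| ≤ 2 ^ d * W'' := by
  have hbound : ∀ (j : Fin d → Fin 2) (r : Fin d),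
      |(-i r + δ r * ((j r).val : ℤ))| ≤ (n : ℤ) := by
    intro j r
    have h1 := (hi r).1; have h2 := (hi r).2
    have h3 := (hδ r).1; have h4 := hδ2 r
    have hv : (j r).val = 0 ∨ (j r).val = 1 := by omega
    rcases hv with hv | hv <;> rw [hv] <;> push_cast <;> rw [abs_le] <;> constructor <;> omega
  calc |∑ j : Fin d → Fin 2, (-1 : ℝ) ^ (∑ r, (j r).val) *
        A (fun r => -i r + δ r * ((j r).val : ℤ))|
      ≤ ∑ j : Fin d → Fin 2, |(-1 : ℝ) ^ (∑ r, (j r).val) *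
        A (fun r => -i r + δ r * ((j r).val : ℤ))| := Finset.abs_sum_le_sum_abs _ _
    _ ≤ ∑ _j : Fin d → Fin 2, W'' := by
        apply Finset.sum_le_sum
        intro j _
        rw [abs_mul, abs_pow, abs_neg, abs_one, one_pow, one_mul]
        exact hW _ (hbound j)
    _ = 2 ^ d * W'' := by
        rw [Finset.sum_const, Finset.card_univ, nsmul_eq_mul]
        congr 1
        simp

open Classical in
theorem stmt_7 (d n : ℕ) (hd : 1 ≤ d) (hn : 1 ≤ n)
    (A A' : (Fin d → ℤ) → ℝ) (W'' M'' : ℝ)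
    (hW'' : IsGreatest {y : ℝ | ∃ x : Fin d → ℤ, (∀ r, |x r| ≤ (n : ℤ)) ∧ y = |A x|} W'')
    (hM'' : M'' = 100 ^ (10 * d) * W'')
    (hA' : ∀ x : Fin d → ℤ, (∀ r, |x r| ≤ (n : ℤ)) →
      A' x = if ∀ r, x r < 0 then A x + M'' else A x) :
    sSup {v : ℝ | ∃ i δ : Fin d → ℤ,
        (∀ r, 1 ≤ i r ∧ i r ≤ (n : ℤ)) ∧ (∀ r, 1 ≤ δ r ∧ δ r ≤ 2 * (n : ℤ)) ∧
        (∀ r, δ r ≤ (n : ℤ) + i r) ∧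
        v = ∑ j : Fin d → Fin 2, (-1 : ℝ) ^ (∑ r, (j r).val) *
              A' (fun r => -i r + δ r * ((j r).val : ℤ))}
      = M'' + sSup {v : ℝ | ∃ i δ : Fin d → ℤ,
          (∀ r, 1 ≤ i r ∧ i r ≤ (n : ℤ)) ∧ (∀ r, 1 ≤ δ r ∧ δ r ≤ 2 * (n : ℤ)) ∧
          (∀ r, i r ≤ δ r ∧ δ r ≤ (n : ℤ) + i r) ∧
          v = ∑ j : Fin d → Fin 2, (-1 : ℝ) ^ (∑ r, (j r).val) *
                A (fun r => -i r + δ r * ((j r).val : ℤ))} := by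
  classical
  set S1 : Set ℝ := {v : ℝ | ∃ i δ : Fin d → ℤ,
        (∀ r, 1 ≤ i r ∧ i r ≤ (n : ℤ)) ∧ (∀ r, 1 ≤ δ r ∧ δ r ≤ 2 * (n : ℤ)) ∧
        (∀ r, δ r ≤ (n : ℤ) + i r) ∧
        v = ∑ j : Fin d → Fin 2, (-1 : ℝ) ^ (∑ r, (j r).val) *
              A' (fun r => -i r + δ r * ((j r).val : ℤ))} with hS1
  set S2 : Set ℝ := {v : ℝ | ∃ i δ : Fin d → ℤ,
          (∀ r, 1 ≤ i r ∧ i r ≤ (n : ℤ)) ∧ (∀ r, 1 ≤ δ r ∧ δ r ≤ 2 * (n : ℤ)) ∧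
          (∀ r, i r ≤ δ r ∧ δ r ≤ (n : ℤ) + i r) ∧
          v = ∑ j : Fin d → Fin 2, (-1 : ℝ) ^ (∑ r, (j r).val) *
                A (fun r => -i r + δ r * ((j r).val : ℤ))} with hS2
  have hWle : ∀ x : Fin d → ℤ, (∀ r, |x r| ≤ (n : ℤ)) → |A x| ≤ W'' :=
    fun x hx => hW''.2 ⟨x, hx, rfl⟩
  have hW0 : 0 ≤ W'' := by
    obtain ⟨x, -, hx⟩ := hW''.1
    rw [hx]; positivity
  have hM0 : 0 ≤ M'' := by rw [hM'']; positivity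
  have hn' : (1 : ℤ) ≤ (n : ℤ) := by exact_mod_cast hn
  -- feasible point
  have hi0 : ∀ r : Fin d, 1 ≤ (fun _ : Fin d => (1:ℤ)) r ∧ (fun _ : Fin d => (1:ℤ)) r ≤ (n:ℤ) :=
    fun r => ⟨le_refl _, hn'⟩
  have hδ0 : ∀ r : Fin d, 1 ≤ (fun _ : Fin d => (1:ℤ)) r ∧ (fun _ : Fin d => (1:ℤ)) r ≤ 2*(n:ℤ) :=
    fun r => ⟨le_refl _, by show (1:ℤ) ≤ 2*(n:ℤ); omega⟩
  have hδ0' : ∀ r : Fin d, (fun _ : Fin d => (1:ℤ)) r ≤ (n:ℤ) + (fun _ : Fin d => (1:ℤ)) r :=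
    fun r => by show (1:ℤ) ≤ (n:ℤ) + 1; omega
  have hδ0'' : ∀ r : Fin d, (fun _ : Fin d => (1:ℤ)) r ≤ (fun _ : Fin d => (1:ℤ)) r ∧
      (fun _ : Fin d => (1:ℤ)) r ≤ (n:ℤ) + (fun _ : Fin d => (1:ℤ)) r :=
    fun r => ⟨le_refl _, by show (1:ℤ) ≤ (n:ℤ) + 1; omega⟩
  have hw0mem : (∑ j : Fin d → Fin 2, (-1 : ℝ) ^ (∑ r, (j r).val) *
      A (fun r => -(fun _ : Fin d => (1:ℤ)) r + (fun _ : Fin d => (1:ℤ)) r * ((j r).val : ℤ))) ∈ S2 :=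
    ⟨_, _, hi0, hδ0, hδ0'', rfl⟩
  have hv0mem : (∑ j : Fin d → Fin 2, (-1 : ℝ) ^ (∑ r, (j r).val) *
      A' (fun r => -(fun _ : Fin d => (1:ℤ)) r + (fun _ : Fin d => (1:ℤ)) r * ((j r).val : ℤ))) ∈ S1 :=
    ⟨_, _, hi0, hδ0, hδ0', rfl⟩
  have hS2ne : S2.Nonempty := ⟨_, hw0mem⟩
  have hS1ne : S1.Nonempty := ⟨_, hv0mem⟩
  have hS2bdd : BddAbove S2 := by
    refine ⟨2 ^ d * W'', ?_⟩
    rintro w ⟨i, δ, hi, hδ, hδ3, rfl⟩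
    exact (abs_le.mp (bound_lem d n A W'' hWle i δ hi hδ (fun r => (hδ3 r).2))).2
  have hS1bdd : BddAbove S1 := by
    refine ⟨M'' + 2 ^ d * W'', ?_⟩
    rintro v ⟨i, δ, hi, hδ, hδ2, rfl⟩
    rw [pointwise_lem d n A A' M'' hA' i δ hi hδ hδ2]
    have h1 := (abs_le.mp (bound_lem d n A W'' hWle i δ hi hδ hδ2)).2
    have h2 : (if ∀ r, i r ≤ δ r then M'' else 0) ≤ M'' := by
      split <;> simp [hM0]
    linarith
  have hpow : (2:ℝ) ^ d * W'' + 2 ^ d * W'' ≤ M'' := by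
    rw [hM'']
    have h1 : (2:ℝ) ^ (d+1) ≤ (100:ℝ) ^ (d+1) :=
      pow_le_pow_left₀ (by norm_num) (by norm_num) _
    have h2 : (100:ℝ) ^ (d+1) ≤ (100:ℝ) ^ (10*d) :=
      pow_le_pow_right₀ (by norm_num) (by omega)
    have h3 : (2:ℝ) ^ d * W'' + 2 ^ d * W'' = 2 ^ (d+1) * W'' := by ring
    rw [h3]
    have := le_trans h1 h2
    nlinarith
  apply le_antisymm
  · apply csSup_le hS1ne
    rintro v ⟨i, δ, hi, hδ, hδ2, rfl⟩
    rw [pointwise_lem d n A A' M'' hA' i δ hi hδ hδ2]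
    by_cases h : ∀ r, i r ≤ δ r
    · rw [if_pos h]
      have hmem : (∑ j : Fin d → Fin 2, (-1 : ℝ) ^ (∑ r, (j r).val) *
          A (fun r => -i r + δ r * ((j r).val : ℤ))) ∈ S2 :=
        ⟨i, δ, hi, hδ, fun r => ⟨h r, hδ2 r⟩, rfl⟩
      have := le_csSup hS2bdd hmem
      linarith
    · rw [if_neg h, add_zero]
      have h1 := (abs_le.mp (bound_lem d n A W'' hWle i δ hi hδ hδ2)).2
      have h2 := (abs_le.mp (bound_lem d n A W'' hWle _ _ hi0 hδ0
        (fun r => (hδ0'' r).2))).1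
      have h3 := le_csSup hS2bdd hw0mem
      linarith
  · have key : ∀ w ∈ S2, M'' + w ≤ sSup S1 := by
      rintro w ⟨i, δ, hi, hδ, hδ3, rfl⟩
      have hδ2 : ∀ r, δ r ≤ (n:ℤ) + i r := fun r => (hδ3 r).2
      have hmem : (∑ j : Fin d → Fin 2, (-1 : ℝ) ^ (∑ r, (j r).val) *
          A' (fun r => -i r + δ r * ((j r).val : ℤ))) ∈ S1 := ⟨i, δ, hi, hδ, hδ2, rfl⟩
      have heq := pointwise_lem d n A A' M'' hA' i δ hi hδ hδ2
      rw [if_pos (fun r => (hδ3 r).1)] at heq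
      have := le_csSup hS1bdd hmem
      linarith
    have h5 : sSup S2 ≤ sSup S1 - M'' :=
      csSup_le hS2ne (fun w hw => by have := key w hw; linarith)
    linarith
end

section
/- Let d ≥ 1, n ≥ 2, and let A : [n]^d → ℝ. Define A' : [n−1]^d → ℝ by A'[i] = Σ_{j ∈ B_d} (−1)^{‖j‖₁} · A[i + j]. Then the maximum over i ∈ [n−1]^d and δ ∈ ℕ^d with i_r + δ_r ≤ n−1 for all r of the box sum Σ_{k : i_r ≤ k_r ≤ i_r+δ_r for all r} A'[k] equals the maximum over i ∈ [n−1]^d and d-tuples δ' of positive integers with i_r + δ'_r ≤ n for all r of Σ_{j ∈ B_d} (−1)^{‖j‖₁} · A[i + δ'×j]. -/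
/-!
The box sum of the finite difference `A'` telescopes. Both sides are linear in `A`, so it
suffices to take `A` a point mass; then the sums over the box and over its corners factor over
the coordinates, and each factor is the one-dimensional telescoping sum
`∑_{k=a}^{a+δ} (f k - f (k+1)) = f a - f (a+δ+1)`.
-/

open Finset

theorem sum_Icc_sub_succ {M : Type*} [AddCommGroup M] (f : ℕ → M) (a δ : ℕ) :
    ∑ k ∈ Icc a (a + δ), (f k - f (k + 1)) = f a - f (a + (δ + 1)) := by
  rw [← Ico_add_one_right_eq_Icc, ← neg_sub, ← sum_Ico_sub f (by omega), ← sum_neg_distrib]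
  simp only [neg_sub]
  rfl

section
variable {ι : Type*} [Fintype ι] [DecidableEq ι]

def cornerSum (F : (ι → ℕ) → ℝ) (i δ : ι → ℕ) : ℝ :=
  ∑ j : ι → Fin 2, (-1 : ℝ) ^ (∑ r, (j r).val) * F (fun r => i r + δ r * (j r).val)

theorem cornerSum_indicator (i δ p : ι → ℕ) :
    cornerSum (fun m => if m = p then 1 else 0) i δ
      = ∏ r, ∑ b : Fin 2, (-1 : ℝ) ^ b.val * (if i r + δ r * b.val = p r then 1 else 0) := by
  rw [Fintype.prod_sum]
  refine sum_congr rfl fun j _ => ?_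
  simp only [prod_mul_distrib, prod_pow_eq_pow_sum, prod_boole, funext_iff, mem_univ,
    true_implies]

theorem sum_Icc_cornerSum_indicator (i δ p : ι → ℕ) :
    ∑ k ∈ Icc i (i + δ), cornerSum (fun m => if m = p then 1 else 0) k 1
      = cornerSum (fun m => if m = p then 1 else 0) i (δ + 1) := by
  simp only [cornerSum_indicator, Pi.add_apply, Pi.one_apply, one_mul]
  rw [Pi.Icc_eq]
  refine (prod_univ_sum (fun r => Icc (i r) (i r + δ r))
    (fun r k => ∑ b : Fin 2, (-1 : ℝ) ^ b.val * if k + b.val = p r then 1 else 0)).symm.trans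
    (prod_congr rfl fun r _ => ?_)
  simp only [Fin.sum_univ_two, Fin.val_zero, Fin.val_one, pow_zero, pow_one, one_mul,
    neg_one_mul, add_zero, mul_zero, mul_one, ← sub_eq_add_neg]
  exact sum_Icc_sub_succ (fun k => if k = p r then (1 : ℝ) else 0) (i r) (δ r)

theorem cornerSum_eq_sum_indicator (F : (ι → ℕ) → ℝ) (i δ : ι → ℕ) (T : Finset (ι → ℕ))
    (hT : ∀ j : ι → Fin 2, (fun r => i r + δ r * (j r).val) ∈ T) :
    cornerSum F i δ = ∑ p ∈ T, F p * cornerSum (fun m => if m = p then 1 else 0) i δ := by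
  simp only [cornerSum, mul_sum, mul_ite, mul_one, mul_zero]
  rw [sum_comm]
  refine sum_congr rfl fun j _ => ?_
  rw [sum_ite_eq T, if_pos (hT j), mul_comm]

theorem sum_Icc_cornerSum_one (F : (ι → ℕ) → ℝ) (i δ : ι → ℕ) :
    ∑ k ∈ Icc i (i + δ), cornerSum F k 1 = cornerSum F i (δ + 1) := by
  have hbit (b : Fin 2) : b.val ≤ 1 := Nat.le_of_lt_succ b.isLt
  set T := Icc i (i + δ + 1)
  have hcorner (k : ι → ℕ) (hk : k ∈ Icc i (i + δ)) (j : ι → Fin 2) :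
      (fun r => k r + (1 : ι → ℕ) r * (j r).val) ∈ T := by
    simp only [T, mem_Icc, Pi.le_def, Pi.add_apply, Pi.one_apply, one_mul] at hk ⊢
    exact ⟨fun r => by have := hk.1 r; omega,
      fun r => by have := hk.2 r; have := hbit (j r); omega⟩
  have hcorner' (j : ι → Fin 2) : (fun r => i r + (δ + 1) r * (j r).val) ∈ T := by
    simp only [T, mem_Icc, Pi.le_def, Pi.add_apply, Pi.one_apply]
    refine ⟨fun r => by omega, fun r => ?_⟩
    have : (δ r + 1) * (j r).val ≤ δ r + 1 := by
      simpa using Nat.mul_le_mul_left (δ r + 1) (hbit (j r))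
    omega
  calc ∑ k ∈ Icc i (i + δ), cornerSum F k 1
      = ∑ k ∈ Icc i (i + δ), ∑ p ∈ T, F p * cornerSum (fun m => if m = p then 1 else 0) k 1 :=
        sum_congr rfl fun k hk => cornerSum_eq_sum_indicator F k 1 T (hcorner k hk)
    _ = ∑ p ∈ T, F p * cornerSum (fun m => if m = p then 1 else 0) i (δ + 1) := by
        rw [sum_comm]
        simp only [← mul_sum, sum_Icc_cornerSum_indicator]
    _ = cornerSum F i (δ + 1) := (cornerSum_eq_sum_indicator F i (δ + 1) T hcorner').symm

end

theorem stmt_9_general (d n : ℕ)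
    (A A' : (Fin d → ℕ) → ℝ)
    (hA' : ∀ i : Fin d → ℕ, (∀ r, 1 ≤ i r ∧ i r ≤ n - 1) →
      A' i = ∑ j : Fin d → Fin 2, (-1 : ℝ) ^ (∑ r, (j r).val) *
        A (fun r => i r + (j r).val)) :
    sSup {x : ℝ | ∃ i δ : Fin d → ℕ,
        (∀ r, 1 ≤ i r ∧ i r ≤ n - 1) ∧ (∀ r, i r + δ r ≤ n - 1) ∧
        x = ∑ k ∈ Finset.Icc i (fun r => i r + δ r), A' k}
      = sSup {x : ℝ | ∃ i δ' : Fin d → ℕ,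
          (∀ r, 1 ≤ i r ∧ i r ≤ n - 1) ∧ (∀ r, 1 ≤ δ' r) ∧ (∀ r, i r + δ' r ≤ n) ∧
          x = ∑ j : Fin d → Fin 2, (-1 : ℝ) ^ (∑ r, (j r).val) *
                A (fun r => i r + δ' r * (j r).val)} := by
  have hbox (i δ : Fin d → ℕ) (hi : ∀ r, 1 ≤ i r ∧ i r ≤ n - 1) (hδ : ∀ r, i r + δ r ≤ n - 1) :
      ∑ k ∈ Icc i (fun r => i r + δ r), A' k = cornerSum A i (δ + 1) := by
    rw [← sum_Icc_cornerSum_one]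
    refine sum_congr rfl fun k hk => ?_
    rw [mem_Icc, Pi.le_def, Pi.le_def] at hk
    rw [hA' k fun r => ⟨(hi r).1.trans (hk.1 r), (hk.2 r).trans (hδ r)⟩]
    simp only [cornerSum, Pi.one_apply, one_mul]
  congr 1
  ext x
  constructor
  · rintro ⟨i, δ, hi, hδ, rfl⟩
    exact ⟨i, δ + 1, hi, fun r => Nat.le_add_left 1 (δ r),
      fun r => by have := hδ r; have := hi r; simp only [Pi.add_apply, Pi.one_apply]; omega, hbox i δ hi hδ⟩
  · rintro ⟨i, δ', hi, hδ'_pos, hδ'_le, rfl⟩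
    have hfit (r : Fin d) : i r + (δ' - 1) r ≤ n - 1 := by
      have := hδ'_le r; have := hδ'_pos r
      simp only [Pi.sub_apply, Pi.one_apply]
      omega
    refine ⟨i, δ' - 1, hi, hfit, ?_⟩
    rw [hbox i _ hi hfit, tsub_add_cancel_of_le hδ'_pos]
    rfl

theorem stmt_9 (d n : ℕ) (hd : 1 ≤ d) (hn : 2 ≤ n)
    (A A' : (Fin d → ℕ) → ℝ)
    (hA' : ∀ i : Fin d → ℕ, (∀ r, 1 ≤ i r ∧ i r ≤ n - 1) →
      A' i = ∑ j : Fin d → Fin 2, (-1 : ℝ) ^ (∑ r, (j r).val) *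
        A (fun r => i r + (j r).val)) :
    sSup {x : ℝ | ∃ i δ : Fin d → ℕ,
        (∀ r, 1 ≤ i r ∧ i r ≤ n - 1) ∧ (∀ r, i r + δ r ≤ n - 1) ∧
        x = ∑ k ∈ Finset.Icc i (fun r => i r + δ r), A' k}
      = sSup {x : ℝ | ∃ i δ' : Fin d → ℕ,
          (∀ r, 1 ≤ i r ∧ i r ≤ n - 1) ∧ (∀ r, 1 ≤ δ' r) ∧ (∀ r, i r + δ' r ≤ n) ∧
          x = ∑ j : Fin d → Fin 2, (-1 : ℝ) ^ (∑ r, (j r).val) *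
                A (fun r => i r + δ' r * (j r).val)} :=
  stmt_9_general d n A A' hA'
end

section
/- Let d ≥ 2 and n ≥ d+1. Let w be a symmetric real weight function on pairs of distinct vertices from [n], let c' be the maximum of |w(u,v)| over u ≠ v, and set c = 100·n^4·c'. Define D : [n]^d → ℝ by D[i] = −c if i_r = i_t for some r ≠ t, and D[i] = Σ_{1≤r<t≤d} w(i_r, i_t) otherwise. Let A be the central array in d dimensions of side-length 2dn+1 (indexed by {−dn,…,dn}^d) defined by: A[x] = −c for all x, except A[−i] = D[i] for every i ∈ [n]^d, and, for every t ∈ [d] and i ∈ [n]^d, A[y] = D[i] for the d-tuple y with y_t = i_1 + ⋯ + i_d and y_r = −i_r for r ≠ t. Let M_A be the maximum over i ∈ [dn]^d and integers Δ with i_r ≤ Δ ≤ dn + i_r for all r of Σ_{j ∈ B_d} A[−i + Δ·j], and let M_G be the maximum over pairwise distinct (v_1,…,v_{d+1}) ∈ [n]^{d+1} of Σ_{1≤r<t≤d+1} w(v_r, v_t). Then M_A = (d−1)·M_G − (2^d − (d+1))·c. -/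
open Finset

section AuxStmt10

variable (w : ℤ → ℤ → ℝ)

def psum10 {m : ℕ} (f : Fin m → ℤ) : ℝ :=
  ∑ r : Fin m, ∑ t : Fin m, if r.val < t.val then w (f r) (f t) else 0

def esum10 {m : ℕ} (f : Fin m → ℤ) : ℝ :=
  ∑ r : Fin m, ∑ t : Fin m, if r ≠ t then w (f r) (f t) else 0

lemma esum10_eq_two_psum10 (hw : ∀ u v, w u v = w v u) {m : ℕ} (f : Fin m → ℤ) :
    esum10 w f = psum10 w f + psum10 w f := by
  have h1 : ∀ r t : Fin m, (if r ≠ t then w (f r) (f t) else 0)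
      = (if r.val < t.val then w (f r) (f t) else 0)
        + (if t.val < r.val then w (f r) (f t) else 0) := by
    intro r t
    rcases lt_trichotomy r.val t.val with h | h | h
    · have hne : r ≠ t := fun he => by simp [he] at h
      simp [h, hne, not_lt_of_gt h]
    · have he : r = t := Fin.ext h
      simp [he]
    · have hne : r ≠ t := fun he => by simp [he] at h
      simp [h, hne, not_lt_of_gt h]
  unfold esum10 psum10
  simp_rw [h1, Finset.sum_add_distrib]
  congr 1
  rw [Finset.sum_comm]
  exact Finset.sum_congr rfl fun r _ => Finset.sum_congr rfl fun t _ => by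
    by_cases h : r.val < t.val <;> simp [h, hw]

lemma esum10_split (hw : ∀ u v, w u v = w v u) {d : ℕ} (v : Fin (d+1) → ℤ) :
    esum10 w v = esum10 w (fun r : Fin d => v r.castSucc)
      + 2 * ∑ r : Fin d, w (v r.castSucc) (v (Fin.last d)) := by
  unfold esum10
  rw [Fin.sum_univ_castSucc]
  have h1 : ∀ r : Fin d, (∑ t : Fin (d+1),
      if (Fin.castSucc r) ≠ t then w (v (Fin.castSucc r)) (v t) else 0)
      = (∑ t : Fin d, if r ≠ t then w (v r.castSucc) (v t.castSucc) else 0)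
        + w (v r.castSucc) (v (Fin.last d)) := by
    intro r
    rw [Fin.sum_univ_castSucc]
    congr 1
    · refine Finset.sum_congr rfl fun t _ => ?_
      by_cases h : r = t
      · simp [h]
      · simp [h, (Fin.castSucc_inj.not.mpr h : ¬ _)]
    · simp [(Fin.castSucc_lt_last r).ne]
  have h2 : (∑ t : Fin (d+1),
      if (Fin.last d) ≠ t then w (v (Fin.last d)) (v t) else 0)
      = ∑ r : Fin d, w (v r.castSucc) (v (Fin.last d)) := by
    rw [Fin.sum_univ_castSucc]
    have h3 : ∀ t : Fin d, Fin.last d ≠ Fin.castSucc t :=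
      fun t => (Fin.castSucc_lt_last t).ne'
    simp only [ne_eq, h3, not_false_eq_true, if_true,
      if_neg (fun h : Fin.last d ≠ Fin.last d => h rfl)]
    simp only [not_true, if_false, add_zero]
    exact Finset.sum_congr rfl fun t _ => hw (v (Fin.last d)) (v t.castSucc)
  simp_rw [h1, h2, Finset.sum_add_distrib]
  ring

lemma sum_esum10_update (hw : ∀ u v, w u v = w v u) {d : ℕ} (i : Fin d → ℤ) (ℓ : ℤ) :
    ∑ t : Fin d, esum10 w (Function.update i t ℓ)
      = ((d:ℝ) - 2) * esum10 w i + (2*((d:ℝ)-1)) * ∑ r, w (i r) ℓ := by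
  unfold esum10
  rw [Finset.sum_comm]
  have key : ∀ r : Fin d, (∑ t : Fin d, ∑ s : Fin d,
      if r ≠ s then w (Function.update i t ℓ r) (Function.update i t ℓ s) else 0)
      = ∑ s : Fin d, (if r ≠ s then
          ((d:ℝ) - 2) * w (i r) (i s) + w ℓ (i s) + w (i r) ℓ else 0) := by
    intro r
    rw [Finset.sum_comm]
    refine Finset.sum_congr rfl fun s _ => ?_
    by_cases h : r = s
    · simp [h]
    · simp only [ne_eq, h, not_false_eq_true, if_true]
      have hpt : ∀ t : Fin d, w (Function.update i t ℓ r) (Function.update i t ℓ s)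
          = w (i r) (i s) + ((if t = r then w ℓ (i s) - w (i r) (i s) else 0)
            + (if t = s then w (i r) ℓ - w (i r) (i s) else 0)) := by
        intro t
        by_cases htr : t = r
        · subst htr
          rw [Function.update_self, Function.update_of_ne (Ne.symm h)]
          simp [h]
        · by_cases hts : t = s
          · subst hts
            rw [Function.update_self, Function.update_of_ne (fun hh : r = t => h (hh.symm ▸ rfl))]
            simp [htr]
          · rw [Function.update_of_ne (fun hh : r = t => htr (hh.symm)),
              Function.update_of_ne (fun hh : s = t => hts (hh.symm))]
            simp [htr, hts]
      simp_rw [hpt]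
      rw [Finset.sum_add_distrib, Finset.sum_add_distrib, Finset.sum_const,
        Finset.card_univ, Fintype.card_fin]
      rw [Finset.sum_ite_eq' Finset.univ r, Finset.sum_ite_eq' Finset.univ s]
      simp [nsmul_eq_mul]
      ring
  simp_rw [key]
  clear key
  have split : ∀ (P : Prop) [Decidable P] (a b cc : ℝ),
      (if P then a + b + cc else 0) = (if P then a else 0) + ((if P then b else 0) + (if P then cc else 0)) := by
    intros P _ a b cc; split <;> ring
  simp_rw [split, Finset.sum_add_distrib]
  have compl : ∀ (P : Prop) [Decidable P] (a : ℝ), (if P then a else 0) = a - (if ¬ P then a else 0) := by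
    intros P _ a; split <;> simp_all
  have h1 : ∑ r : Fin d, ∑ s : Fin d, (if r ≠ s then ((d:ℝ)-2) * w (i r) (i s) else 0)
      = ((d:ℝ)-2) * ∑ r : Fin d, ∑ s : Fin d, (if r ≠ s then w (i r) (i s) else 0) := by
    rw [Finset.mul_sum]
    refine Finset.sum_congr rfl fun r _ => ?_
    rw [Finset.mul_sum]
    refine Finset.sum_congr rfl fun s _ => ?_
    split <;> ring
  have h2 : ∑ r : Fin d, ∑ s : Fin d, (if r ≠ s then w (i r) ℓ else 0)
      = ((d:ℝ)-1) * ∑ r, w (i r) ℓ := by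
    have inner : ∀ r : Fin d, ∑ s : Fin d, (if r ≠ s then w (i r) ℓ else 0)
        = ((d:ℝ)-1) * w (i r) ℓ := by
      intro r
      simp_rw [compl (_ ≠ _)]
      rw [Finset.sum_sub_distrib, Finset.sum_const, Finset.card_univ, Fintype.card_fin]
      simp_rw [not_not]
      rw [Finset.sum_ite_eq Finset.univ r]
      simp [nsmul_eq_mul]
      ring
    simp_rw [inner]
    rw [Finset.mul_sum]
  have h3 : ∑ r : Fin d, ∑ s : Fin d, (if r ≠ s then w ℓ (i s) else 0)
      = ((d:ℝ)-1) * ∑ r, w (i r) ℓ := by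
    rw [Finset.sum_comm]
    have inner : ∀ s : Fin d, ∑ r : Fin d, (if r ≠ s then w ℓ (i s) else 0)
        = ((d:ℝ)-1) * w (i s) ℓ := by
      intro s
      simp_rw [compl (_ ≠ _)]
      rw [Finset.sum_sub_distrib, Finset.sum_const, Finset.card_univ, Fintype.card_fin]
      simp_rw [not_not]
      rw [Finset.sum_ite_eq' Finset.univ s]
      simp [nsmul_eq_mul]
      rw [hw ℓ (i s)]
      ring
    simp_rw [inner]
    rw [Finset.mul_sum]
  rw [h1, h2, h3]
  ring

lemma master10 (hw : ∀ u v, w u v = w v u) {d : ℕ} (v : Fin (d+1) → ℤ) :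
    esum10 w (fun r : Fin d => v r.castSucc)
      + ∑ t : Fin d, esum10 w (Function.update (fun r : Fin d => v r.castSucc) t (v (Fin.last d)))
      = ((d:ℝ) - 1) * esum10 w v := by
  rw [sum_esum10_update w hw, esum10_split w hw v]
  ring

lemma master10_psum (hw : ∀ u v, w u v = w v u) {d : ℕ} (v : Fin (d+1) → ℤ) :
    psum10 w (fun r : Fin d => v r.castSucc)
      + ∑ t : Fin d, psum10 w (Function.update (fun r : Fin d => v r.castSucc) t (v (Fin.last d)))
      = ((d:ℝ) - 1) * psum10 w v := by
  have h := master10 w hw v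
  rw [esum10_eq_two_psum10 w hw, esum10_eq_two_psum10 w hw v] at h
  simp_rw [esum10_eq_two_psum10 w hw] at h
  rw [Finset.sum_add_distrib] at h
  linarith

lemma psum10_abs_le {n : ℤ} {c' : ℝ} (hc'0 : 0 ≤ c')
    (hwb : ∀ u v : ℤ, 1 ≤ u → u ≤ n → 1 ≤ v → v ≤ n → u ≠ v → |w u v| ≤ c')
    {m : ℕ} (f : Fin m → ℤ) (hf : ∀ r, 1 ≤ f r ∧ f r ≤ n)
    (hinj : ∀ r t : Fin m, r ≠ t → f r ≠ f t) :
    |psum10 w f| ≤ (m:ℝ)^2 * c' := by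
  unfold psum10
  calc |∑ r : Fin m, ∑ t : Fin m, if r.val < t.val then w (f r) (f t) else 0|
      ≤ ∑ r : Fin m, |∑ t : Fin m, if r.val < t.val then w (f r) (f t) else 0| :=
        Finset.abs_sum_le_sum_abs _ _
    _ ≤ ∑ _r : Fin m, (m:ℝ) * c' := by
        refine Finset.sum_le_sum fun r _ => ?_
        calc |∑ t : Fin m, if r.val < t.val then w (f r) (f t) else 0|
            ≤ ∑ t : Fin m, |if r.val < t.val then w (f r) (f t) else 0| :=
              Finset.abs_sum_le_sum_abs _ _
          _ ≤ ∑ _t : Fin m, c' := by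
              refine Finset.sum_le_sum fun t _ => ?_
              by_cases h : r.val < t.val
              · rw [if_pos h]
                exact hwb _ _ (hf r).1 (hf r).2 (hf t).1 (hf t).2
                  (hinj r t (fun he => by simp [he] at h))
              · rw [if_neg h]; simpa using hc'0
          _ = (m:ℝ) * c' := by
              rw [Finset.sum_const, Finset.card_univ, Fintype.card_fin, nsmul_eq_mul]
    _ = (m:ℝ)^2 * c' := by
        rw [Finset.sum_const, Finset.card_univ, Fintype.card_fin, nsmul_eq_mul]
        ring

lemma snoc_inj10 {d : ℕ} (i : Fin d → ℤ) (ℓ : ℤ)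
    (hi : ∀ r t, r ≠ t → i r ≠ i t) (hl : ∀ r, ℓ ≠ i r) :
    Function.Injective (Fin.snoc i ℓ : Fin (d+1) → ℤ) := by
  intro a b hab
  induction a using Fin.lastCases with
  | last =>
    induction b using Fin.lastCases with
    | last => rfl
    | cast b' =>
      rw [Fin.snoc_last, Fin.snoc_castSucc] at hab
      exact absurd hab (hl b')
  | cast a' =>
    induction b using Fin.lastCases with
    | last =>
      rw [Fin.snoc_last, Fin.snoc_castSucc] at hab
      exact absurd hab.symm (hl a')
    | cast b' =>
      rw [Fin.snoc_castSucc, Fin.snoc_castSucc] at hab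
      by_cases h : a' = b'
      · rw [h]
      · exact absurd hab (hi a' b' h)

end AuxStmt10

open Classical in
theorem stmt_10 (d n : ℕ) (hd : 2 ≤ d) (hn : d + 1 ≤ n)
    (w : ℤ → ℤ → ℝ) (hw : ∀ u v : ℤ, w u v = w v u)
    (c' c : ℝ)
    (hc' : IsGreatest {x : ℝ | ∃ u v : ℤ,
      1 ≤ u ∧ u ≤ (n : ℤ) ∧ 1 ≤ v ∧ v ≤ (n : ℤ) ∧ u ≠ v ∧ x = |w u v|} c')
    (hc : c = 100 * (n : ℝ) ^ 4 * c')
    (D : (Fin d → ℤ) → ℝ)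
    (hD : ∀ i : Fin d → ℤ, (∀ r, 1 ≤ i r ∧ i r ≤ (n : ℤ)) →
      D i = if ∃ r t : Fin d, r ≠ t ∧ i r = i t then -c
            else ∑ r : Fin d, ∑ t : Fin d, if r.val < t.val then w (i r) (i t) else 0)
    (A : (Fin d → ℤ) → ℝ)
    (hA1 : ∀ i : Fin d → ℤ, (∀ r, 1 ≤ i r ∧ i r ≤ (n : ℤ)) →
      A (fun r => -i r) = D i)
    (hA2 : ∀ (t : Fin d) (i : Fin d → ℤ), (∀ r, 1 ≤ i r ∧ i r ≤ (n : ℤ)) →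
      A (fun r => if r = t then ∑ s, i s else -i r) = D i)
    (hA3 : ∀ x : Fin d → ℤ, (∀ r, |x r| ≤ (d : ℤ) * n) →
      ¬(∃ i : Fin d → ℤ, (∀ r, 1 ≤ i r ∧ i r ≤ (n : ℤ)) ∧ x = fun r => -i r) →
      ¬(∃ (t : Fin d) (i : Fin d → ℤ), (∀ r, 1 ≤ i r ∧ i r ≤ (n : ℤ)) ∧
          x = fun r => if r = t then ∑ s, i s else -i r) →
      A x = -c)
    (MA MG : ℝ)
    (hMA : MA = sSup {x : ℝ | ∃ (i : Fin d → ℤ) (Δ : ℤ),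
      (∀ r, 1 ≤ i r ∧ i r ≤ (d : ℤ) * n) ∧ (∀ r, i r ≤ Δ ∧ Δ ≤ (d : ℤ) * n + i r) ∧
      x = ∑ j : Fin d → Fin 2, A (fun r => -i r + Δ * ((j r).val : ℤ))})
    (hMG : MG = sSup {x : ℝ | ∃ v : Fin (d + 1) → ℤ, Function.Injective v ∧
      (∀ r, 1 ≤ v r ∧ v r ≤ (n : ℤ)) ∧
      x = ∑ r : Fin (d + 1), ∑ t : Fin (d + 1), if r.val < t.val then w (v r) (v t) else 0}) :
    MA = ((d : ℝ) - 1) * MG - ((2 : ℝ) ^ d - (d + 1)) * c := by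
  classical
  -- fold MG set into psum10
  have hMG' : MG = sSup {x : ℝ | ∃ v : Fin (d + 1) → ℤ, Function.Injective v ∧
      (∀ r, 1 ≤ v r ∧ v r ≤ (n : ℤ)) ∧ x = psum10 w v} := hMG
  clear hMG
  set SG : Set ℝ := {x : ℝ | ∃ v : Fin (d + 1) → ℤ, Function.Injective v ∧
      (∀ r, 1 ≤ v r ∧ v r ≤ (n : ℤ)) ∧ x = psum10 w v} with hSGdef
  -- basic numeric facts
  have hwb : ∀ u v : ℤ, 1 ≤ u → u ≤ (n:ℤ) → 1 ≤ v → v ≤ (n:ℤ) → u ≠ v → |w u v| ≤ c' :=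
    fun u v h1 h2 h3 h4 h5 => hc'.2 ⟨u, v, h1, h2, h3, h4, h5, rfl⟩
  have hc'0 : 0 ≤ c' := by
    obtain ⟨u, v, _, _, _, _, _, hx⟩ := hc'.1
    rw [hx]; positivity
  have hc0 : 0 ≤ c := by rw [hc]; positivity
  have hn3 : (3:ℝ) ≤ (n:ℝ) := by
    have : 3 ≤ n := by omega
    exact_mod_cast this
  have hdn : (d:ℝ) + 1 ≤ (n:ℝ) := by exact_mod_cast hn
  have hd2 : (2:ℝ) ≤ (d:ℝ) := by exact_mod_cast hd
  -- the canonical injective tuple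
  have hv0 : ∃ v : Fin (d+1) → ℤ, Function.Injective v ∧ (∀ r, 1 ≤ v r ∧ v r ≤ (n:ℤ)) := by
    refine ⟨fun r => (r.val : ℤ) + 1, ?_, ?_⟩
    · intro a b hab
      simp only at hab
      have hab2 : a.val = b.val := by omega
      exact Fin.ext hab2
    · intro r
      simp only
      have := r.isLt
      omega
  -- SG is finite, nonempty, with greatest element MG
  have hSGfin : SG.Finite := by
    have : SG ⊆ ↑((((Fintype.piFinset (fun _ : Fin (d+1) => Finset.Icc (1:ℤ) n))).image
        (fun v => psum10 w v))) := by
      rintro x ⟨v, hvinj, hvr, rfl⟩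
      simp only [Finset.coe_image, Set.mem_image, Finset.mem_coe, Fintype.mem_piFinset,
        Finset.mem_Icc]
      exact ⟨v, fun r => hvr r, rfl⟩
    exact Set.Finite.subset (Finset.finite_toSet _) this
  have hSGne : SG.Nonempty := by
    obtain ⟨v, h1, h2⟩ := hv0
    exact ⟨psum10 w v, v, h1, h2, rfl⟩
  have hMGgr : IsGreatest SG MG := by
    rw [hMG']
    exact ⟨hSGne.csSup_mem hSGfin, fun x hx => le_csSup hSGfin.bddAbove hx⟩
  -- psum bound for valid tuples
  have habs : ∀ {m : ℕ} (f : Fin m → ℤ), (∀ r, 1 ≤ f r ∧ f r ≤ (n:ℤ)) →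
      (∀ r t : Fin m, r ≠ t → f r ≠ f t) → (m ≤ n) → |psum10 w f| ≤ (n:ℝ)^2 * c' := by
    intro m f hf hinj hm
    have h1 := psum10_abs_le w hc'0 hwb f hf hinj
    have h2 : (m:ℝ)^2 * c' ≤ (n:ℝ)^2 * c' := by
      have hmn : (m:ℝ) ≤ (n:ℝ) := by exact_mod_cast hm
      have hm0 : (0:ℝ) ≤ (m:ℝ) := by positivity
      exact mul_le_mul_of_nonneg_right (pow_le_pow_left₀ hm0 hmn 2) hc'0
    linarith
  -- lower bound on MG
  have hMGlow : -((n:ℝ)^2 * c') ≤ MG := by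
    obtain ⟨v, h1, h2⟩ := hv0
    have hmem : psum10 w v ∈ SG := ⟨v, h1, h2, rfl⟩
    have := habs v h2 (fun r t hrt => fun he => hrt (h1 he)) hn
    have := abs_le.mp this
    linarith [hMGgr.2 hmem]
  -- D bound
  have hDle : ∀ f : Fin d → ℤ, (∀ r, 1 ≤ f r ∧ f r ≤ (n:ℤ)) → D f ≤ (n:ℝ)^2 * c' := by
    intro f hf
    rw [hD f hf]
    split
    · nlinarith
    · next h =>
      push_neg at h
      have : (∑ r : Fin d, ∑ t : Fin d, if r.val < t.val then w (f r) (f t) else 0)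
          = psum10 w f := rfl
      rw [this]
      have := abs_le.mp (habs f hf h (by omega))
      linarith
  -- evaluation lemmas for A
  have hE0b : ∀ (i : Fin d → ℤ), (∀ r, 1 ≤ i r ∧ i r ≤ (d:ℤ)*n) →
      ¬(∀ r, i r ≤ (n:ℤ)) → A (fun r => -i r) = -c := by
    intro i h1 hno
    apply hA3
    · intro r
      have := h1 r
      rw [abs_le]
      omega
    · rintro ⟨i', hi', heq⟩
      push_neg at hno
      obtain ⟨r0, hr0⟩ := hno
      have := congrFun heq r0
      have h2 := (hi' r0)
      omega
    · rintro ⟨t, i', hi', heq⟩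
      have h3 : -i t = ∑ s, i' s := by simpa using congrFun heq t
      have h4 : (0:ℤ) ≤ ∑ s, i' s := Finset.sum_nonneg fun s _ => by linarith [(hi' s).1]
      have := (h1 t).1
      omega
  have hsumu : ∀ (i : Fin d → ℤ) (t : Fin d) (ℓ : ℤ),
      ∑ s, Function.update i t ℓ s = ℓ + (∑ s, i s) - i t := by
    intro i t ℓ
    rw [Finset.sum_update_of_mem (Finset.mem_univ t)]
    have h5 : ∑ s, i s = i t + ∑ s ∈ Finset.univ.erase t, i s :=
      (Finset.add_sum_erase _ _ (Finset.mem_univ t)).symm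
    rw [← Finset.erase_eq]
    omega
  have hArmg : ∀ (i : Fin d → ℤ) (Δ : ℤ), ∀ t : Fin d,
      (∀ r, 1 ≤ Function.update i t (Δ - ∑ s, i s) r ∧
        Function.update i t (Δ - ∑ s, i s) r ≤ (n:ℤ)) →
      A (fun r => if r = t then Δ - i t else -i r)
        = D (Function.update i t (Δ - ∑ s, i s)) := by
    intro i Δ t hu
    have hfeq : (fun r => if r = t then Δ - i t else -i r)
        = (fun r => if r = t then ∑ s, Function.update i t (Δ - ∑ s, i s) s
            else -(Function.update i t (Δ - ∑ s, i s)) r) := by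
      funext r
      by_cases hr : r = t
      · subst hr
        rw [if_pos rfl, if_pos rfl, hsumu]
        ring
      · rw [if_neg hr, if_neg hr, Function.update_of_ne hr]
    rw [hfeq, hA2 t _ hu]
  have hArmb : ∀ (i : Fin d → ℤ) (Δ : ℤ), (∀ r, 1 ≤ i r ∧ i r ≤ (d:ℤ)*n) →
      (∀ r, i r ≤ Δ ∧ Δ ≤ (d:ℤ)*n + i r) → ∀ t : Fin d,
      ¬(∀ r, 1 ≤ Function.update i t (Δ - ∑ s, i s) r ∧
        Function.update i t (Δ - ∑ s, i s) r ≤ (n:ℤ)) →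
      A (fun r => if r = t then Δ - i t else -i r) = -c := by
    intro i Δ h1 h2 t hne
    apply hA3
    · intro r
      by_cases hr : r = t
      · subst hr
        simp only [if_pos rfl]
        have := h1 r; have := h2 r
        rw [abs_le]
        omega
      · simp only [if_neg hr]
        have := h1 r
        rw [abs_le]
        omega
    · rintro ⟨i', hi', heq⟩
      have h3 : Δ - i t = -i' t := by simpa using congrFun heq t
      have := (hi' t).1
      have := (h2 t).1
      omega
    · rintro ⟨t', i', hi', heq⟩
      by_cases htt : t' = t
      · subst htt
        apply hne
        have hoff : ∀ r, r ≠ t' → i' r = i r := by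
          intro r hr
          have := congrFun heq r
          simp only [if_neg hr] at this
          omega
        have hsum : Δ - i t' = ∑ s, i' s := by
          have := congrFun heq t'
          simpa using this
        have herase : ∑ s ∈ Finset.univ.erase t', i' s = ∑ s ∈ Finset.univ.erase t', i s :=
          Finset.sum_congr rfl fun r hr => hoff r (Finset.mem_erase.mp hr).1
        have hi't : i' t' = Δ - ∑ s, i s := by
          have e1 : ∑ s, i' s = i' t' + ∑ s ∈ Finset.univ.erase t', i' s :=
            (Finset.add_sum_erase _ _ (Finset.mem_univ t')).symm
          have e2 : ∑ s, i s = i t' + ∑ s ∈ Finset.univ.erase t', i s :=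
            (Finset.add_sum_erase _ _ (Finset.mem_univ t')).symm
          omega
        intro r
        by_cases hr : r = t'
        · subst hr
          rw [Function.update_self, ← hi't]
          exact hi' r
        · rw [Function.update_of_ne hr, ← hoff r hr]
          exact hi' r
      · have ht' : t ≠ t' := fun hh => htt hh.symm
        have h3 : Δ - i t = -i' t := by simpa [ht'] using congrFun heq t
        have := (hi' t).1
        have := (h2 t).1
        omega
  -- corners with at least two positive coordinates give -c
  have hbig : ∀ (i : Fin d → ℤ) (Δ : ℤ), (∀ r, 1 ≤ i r ∧ i r ≤ (d:ℤ)*n) →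
      (∀ r, i r ≤ Δ ∧ Δ ≤ (d:ℤ)*n + i r) → ∀ j : Fin d → Fin 2,
      (∃ r s : Fin d, r ≠ s ∧ j r ≠ 0 ∧ j s ≠ 0) →
      A (fun r => -i r + Δ * ((j r).val : ℤ)) = -c := by
    intro i Δ h1 h2 j ⟨r0, s0, hrs, hr0, hs0⟩
    have hval : ∀ r : Fin d, j r ≠ 0 → ((j r).val : ℤ) = 1 := by
      intro r hr
      have : (j r).val < 2 := (j r).isLt
      have : (j r).val ≠ 0 := fun h => hr (Fin.ext h)
      omega
    apply hA3
    · intro r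
      have := h1 r; have := h2 r
      by_cases hjr : j r = 0
      · rw [hjr]
        simp only [Fin.val_zero, Int.ofNat_zero, mul_zero, add_zero]
        rw [abs_le]
        constructor <;> omega
      · rw [hval r hjr, abs_le]
        constructor <;> omega
    · rintro ⟨i', hi', heq⟩
      have h3 := congrFun heq r0
      simp only [hval r0 hr0] at h3
      have := (hi' r0).1
      have := h2 r0
      omega
    · rintro ⟨t, i', hi', heq⟩
      have hone : ∃ u : Fin d, u ≠ t ∧ j u ≠ 0 := by
        by_cases h : r0 = t
        · exact ⟨s0, by rw [← h]; exact hrs.symm, hs0⟩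
        · exact ⟨r0, h, hr0⟩
      obtain ⟨u, hut, hju⟩ := hone
      have h3 := congrFun heq u
      simp only [hval u hju, if_neg hut] at h3
      have := (hi' u).1
      have := h2 u
      omega
  -- decomposition of the 2^d corner sum
  have hdecomp : ∀ (i : Fin d → ℤ) (Δ : ℤ), (∀ r, 1 ≤ i r ∧ i r ≤ (d:ℤ)*n) →
      (∀ r, i r ≤ Δ ∧ Δ ≤ (d:ℤ)*n + i r) →
      (∑ j : Fin d → Fin 2, A (fun r => -i r + Δ * ((j r).val : ℤ)))
        = (A (fun r => -i r) + c)
          + (∑ t : Fin d, (A (fun r => if r = t then Δ - i t else -i r) + c))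
          - (2:ℝ)^d * c := by
    intro i Δ h1 h2
    set g : (Fin d → Fin 2) → ℝ := fun j => A (fun r => -i r + Δ * ((j r).val : ℤ)) with hg
    have hδinj : Function.Injective (fun (t : Fin d) => (fun r => if r = t then (1:Fin 2) else 0)) := by
      intro a b hab
      have := congrFun hab a
      simp only [if_pos rfl] at this
      by_contra h
      rw [if_neg h] at this
      exact one_ne_zero this
    have h0notin : (fun _ : Fin d => (0 : Fin 2)) ∉
        Finset.univ.image (fun (t : Fin d) => (fun r => if r = t then (1:Fin 2) else 0)) := by
      simp only [Finset.mem_image, Finset.mem_univ, true_and, not_exists]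
      intro t h
      have := congrFun h t
      simp only [if_pos rfl] at this
      exact absurd this (by decide)
    have hsub : ∑ j ∈ insert (fun _ : Fin d => (0:Fin 2))
        (Finset.univ.image (fun (t : Fin d) => (fun r => if r = t then (1:Fin 2) else 0))),
        (g j + c) = ∑ j : Fin d → Fin 2, (g j + c) := by
      apply Finset.sum_subset (Finset.subset_univ _)
      intro j _ hj
      simp only [Finset.mem_insert, Finset.mem_image, Finset.mem_univ, true_and] at hj
      push_neg at hj
      obtain ⟨hj0, hjδ⟩ := hj
      have htwo : ∃ r s : Fin d, r ≠ s ∧ j r ≠ 0 ∧ j s ≠ 0 := by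
        have hr : ∃ r, j r ≠ 0 := by
          by_contra h
          push_neg at h
          exact hj0 (funext h)
        obtain ⟨r, hr⟩ := hr
        by_cases h : ∃ s, s ≠ r ∧ j s ≠ 0
        · obtain ⟨s, hsr, hs⟩ := h
          exact ⟨r, s, fun he => hsr he.symm, hr, hs⟩
        · exfalso
          push_neg at h
          apply hjδ r
          funext s
          by_cases hs : s = r
          · subst hs
            rw [if_pos rfl]
            have : (j s).val < 2 := (j s).isLt
            have : (j s).val ≠ 0 := fun hh => hr (Fin.ext hh)
            exact Fin.ext (by omega)
          · rw [if_neg hs]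
            exact (h s hs).symm
      rw [hg]
      simp only
      rw [hbig i Δ h1 h2 j htwo]
      ring
    have hins : ∑ j ∈ insert (fun _ : Fin d => (0:Fin 2))
        (Finset.univ.image (fun (t : Fin d) => (fun r => if r = t then (1:Fin 2) else 0))),
        (g j + c)
        = (g (fun _ => 0) + c) + ∑ t : Fin d,
            (g (fun r => if r = t then 1 else 0) + c) := by
      rw [Finset.sum_insert h0notin, Finset.sum_image (fun a _ b _ h => hδinj h)]
    have htot : ∑ j : Fin d → Fin 2, (g j + c) = (∑ j : Fin d → Fin 2, g j) + (2:ℝ)^d * c := by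
      rw [Finset.sum_add_distrib, Finset.sum_const, Finset.card_univ]
      simp only [nsmul_eq_mul]
      congr 1
      norm_num [Fintype.card_fun]
    have hg0 : g (fun _ => 0) = A (fun r => -i r) := by
      show A (fun r => -i r + Δ * (((0:Fin 2)).val : ℤ)) = _
      congr 1
      funext r
      simp
    have hgδ : ∀ t : Fin d, g (fun r => if r = t then 1 else 0)
        = A (fun r => if r = t then Δ - i t else -i r) := by
      intro t
      show A (fun r => -i r + Δ * (((if r = t then (1:Fin 2) else 0)).val : ℤ)) = _
      congr 1
      funext r
      by_cases hr : r = t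
      · subst hr
        rw [if_pos rfl, if_pos rfl]
        simp
        ring
      · rw [if_neg hr, if_neg hr]
        simp
    have hfin : ∑ t : Fin d, (g (fun r => if r = t then 1 else 0) + c)
        = ∑ t : Fin d, (A (fun r => if r = t then Δ - i t else -i r) + c) :=
      Finset.sum_congr rfl fun t _ => by rw [hgδ t]
    have := hsub.symm.trans hins
    rw [htot] at this
    rw [hg0, hfin] at this
    linarith
  -- value of a good configuration
  have hgoodval : ∀ (i : Fin d → ℤ) (Δ : ℤ), (∀ r, 1 ≤ i r ∧ i r ≤ (d:ℤ)*n) →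
      (∀ r, i r ≤ Δ ∧ Δ ≤ (d:ℤ)*n + i r) →
      (∀ r, i r ≤ (n:ℤ)) → (∀ r t : Fin d, r ≠ t → i r ≠ i t) →
      1 ≤ Δ - ∑ s, i s → Δ - ∑ s, i s ≤ (n:ℤ) → (∀ r, Δ - ∑ s, i s ≠ i r) →
      (∑ j : Fin d → Fin 2, A (fun r => -i r + Δ * ((j r).val : ℤ)))
        = ((d:ℝ)-1) * psum10 w (Fin.snoc i (Δ - ∑ s, i s) : Fin (d+1) → ℤ)
          + ((d:ℝ)+1) * c - (2:ℝ)^d * c := by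
    intro i Δ h1 h2 hle hinj hl1 hl2 hlne
    have hrange : ∀ r, 1 ≤ i r ∧ i r ≤ (n:ℤ) := fun r => ⟨(h1 r).1, hle r⟩
    have ha0 : A (fun r => -i r) = psum10 w i := by
      rw [hA1 i hrange, hD i hrange,
        if_neg (by rintro ⟨r, t, hrt, he⟩; exact hinj r t hrt he)]
      rfl
    have hurange : ∀ t : Fin d, ∀ r, 1 ≤ Function.update i t (Δ - ∑ s, i s) r ∧
        Function.update i t (Δ - ∑ s, i s) r ≤ (n:ℤ) := by
      intro t r
      by_cases hr : r = t
      · subst hr; rw [Function.update_self]; exact ⟨hl1, hl2⟩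
      · rw [Function.update_of_ne hr]; exact hrange r
    have hudist : ∀ t : Fin d, ∀ r s : Fin d, r ≠ s →
        Function.update i t (Δ - ∑ s, i s) r ≠ Function.update i t (Δ - ∑ s, i s) s := by
      intro t r s hrs
      by_cases hr : r = t
      · subst hr
        have hs : s ≠ r := fun h => hrs h.symm
        rw [Function.update_self, Function.update_of_ne hs]
        exact hlne s
      · by_cases hs : s = t
        · subst hs
          rw [Function.update_self, Function.update_of_ne hr]
          exact fun h => (hlne r) h.symm
        · rw [Function.update_of_ne hr, Function.update_of_ne hs]
          exact hinj r s hrs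
    have harm : ∀ t : Fin d, A (fun r => if r = t then Δ - i t else -i r)
        = psum10 w (Function.update i t (Δ - ∑ s, i s)) := by
      intro t
      rw [hArmg i Δ t (hurange t), hD _ (hurange t),
        if_neg (by rintro ⟨r, s, hrs, he⟩; exact hudist t r s hrs he)]
      rfl
    rw [hdecomp i Δ h1 h2, ha0]
    have harmsum : (∑ t : Fin d, (A (fun r => if r = t then Δ - i t else -i r) + c))
        = ∑ t : Fin d, (psum10 w (Function.update i t (Δ - ∑ s, i s)) + c) :=
      Finset.sum_congr rfl fun t _ => by rw [harm t]
    rw [harmsum, Finset.sum_add_distrib, Finset.sum_const, Finset.card_univ,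
      Fintype.card_fin, nsmul_eq_mul]
    have hident := master10_psum w hw (Fin.snoc i (Δ - ∑ s, i s) : Fin (d+1) → ℤ)
    have hvc : (fun r : Fin d => (Fin.snoc i (Δ - ∑ s, i s) : Fin (d+1) → ℤ) r.castSucc) = i :=
      funext fun r => Fin.snoc_castSucc _ _ _
    have hvl : (Fin.snoc i (Δ - ∑ s, i s) : Fin (d+1) → ℤ) (Fin.last d) = Δ - ∑ s, i s :=
      Fin.snoc_last _ _
    rw [hvc, hvl] at hident
    linarith
  -- the target value
  set T : ℝ := ((d:ℝ) - 1) * MG - ((2:ℝ)^d - ((d:ℝ) + 1)) * c with hT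
  have hd1 : (0:ℝ) ≤ (d:ℝ) - 1 := by linarith
  have hBnn : (0:ℝ) ≤ (n:ℝ)^2 * c' + c := by positivity
  have hnum : (d:ℝ) * ((n:ℝ)^2*c' + c) - (2:ℝ)^d * c ≤ T := by
    have k1 : ((d:ℝ)-1) * (-((n:ℝ)^2 * c')) ≤ ((d:ℝ)-1) * MG :=
      mul_le_mul_of_nonneg_left hMGlow hd1
    have e3 : (0:ℝ) ≤ (n:ℝ)^3 * c' := by positivity
    have e2 : (0:ℝ) ≤ (n:ℝ)^2 * c' := by positivity
    have e1 : 2*(d:ℝ) - 1 ≤ 2*(n:ℝ) := by linarith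
    have e4 := mul_le_mul_of_nonneg_right e1 e2
    have e5 : (0:ℝ) ≤ ((n:ℝ)^3*c') * (100*(n:ℝ) - 2) :=
      mul_nonneg e3 (by linarith)
    rw [hT, hc]
    nlinarith [k1, e4, e5]
  -- bounds on the corner values
  have hbnd0 : ∀ (i : Fin d → ℤ), (∀ r, 1 ≤ i r ∧ i r ≤ (d:ℤ)*n) →
      A (fun r => -i r) + c ≤ (n:ℝ)^2*c' + c := by
    intro i h1
    by_cases hle : ∀ r, i r ≤ (n:ℤ)
    · have hrange : ∀ r, 1 ≤ i r ∧ i r ≤ (n:ℤ) := fun r => ⟨(h1 r).1, hle r⟩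
      rw [hA1 i hrange]
      linarith [hDle i hrange]
    · rw [hE0b i h1 hle]
      have : (0:ℝ) ≤ (n:ℝ)^2 * c' := by positivity
      linarith
  have hbndA : ∀ (i : Fin d → ℤ) (Δ : ℤ), (∀ r, 1 ≤ i r ∧ i r ≤ (d:ℤ)*n) →
      (∀ r, i r ≤ Δ ∧ Δ ≤ (d:ℤ)*n + i r) → ∀ t : Fin d,
      A (fun r => if r = t then Δ - i t else -i r) + c ≤ (n:ℝ)^2*c' + c := by
    intro i Δ h1 h2 t
    by_cases hu : ∀ r, 1 ≤ Function.update i t (Δ - ∑ s, i s) r ∧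
        Function.update i t (Δ - ∑ s, i s) r ≤ (n:ℤ)
    · rw [hArmg i Δ t hu]
      linarith [hDle _ hu]
    · rw [hArmb i Δ h1 h2 t hu]
      have : (0:ℝ) ≤ (n:ℝ)^2 * c' := by positivity
      linarith
  -- finishing bounds in the degenerate cases
  have hfin0 : ∀ (i : Fin d → ℤ) (Δ : ℤ), (∀ r, 1 ≤ i r ∧ i r ≤ (d:ℤ)*n) →
      (∀ r, i r ≤ Δ ∧ Δ ≤ (d:ℤ)*n + i r) → A (fun r => -i r) = -c →
      (∑ j : Fin d → Fin 2, A (fun r => -i r + Δ * ((j r).val : ℤ))) ≤ T := by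
    intro i Δ h1 h2 hz
    rw [hdecomp i Δ h1 h2, hz]
    have hsum : (∑ t : Fin d, (A (fun r => if r = t then Δ - i t else -i r) + c))
        ≤ (d:ℝ) * ((n:ℝ)^2*c' + c) := by
      calc (∑ t : Fin d, (A (fun r => if r = t then Δ - i t else -i r) + c))
          ≤ ∑ _t : Fin d, ((n:ℝ)^2*c' + c) :=
            Finset.sum_le_sum fun t _ => hbndA i Δ h1 h2 t
        _ = (d:ℝ) * ((n:ℝ)^2*c' + c) := by
            rw [Finset.sum_const, Finset.card_univ, Fintype.card_fin, nsmul_eq_mul]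
    linarith
  have hfinA : ∀ (i : Fin d → ℤ) (Δ : ℤ), (∀ r, 1 ≤ i r ∧ i r ≤ (d:ℤ)*n) →
      (∀ r, i r ≤ Δ ∧ Δ ≤ (d:ℤ)*n + i r) → ∀ t0 : Fin d,
      A (fun r => if r = t0 then Δ - i t0 else -i r) = -c →
      (∑ j : Fin d → Fin 2, A (fun r => -i r + Δ * ((j r).val : ℤ))) ≤ T := by
    intro i Δ h1 h2 t0 hz
    rw [hdecomp i Δ h1 h2]
    have hsum : (∑ t : Fin d, (A (fun r => if r = t then Δ - i t else -i r) + c))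
        ≤ ((d:ℝ) - 1) * ((n:ℝ)^2*c' + c) := by
      have hsplit : (∑ t : Fin d, (A (fun r => if r = t then Δ - i t else -i r) + c))
          = (A (fun r => if r = t0 then Δ - i t0 else -i r) + c)
            + ∑ t ∈ Finset.univ.erase t0, (A (fun r => if r = t then Δ - i t else -i r) + c) :=
        (Finset.add_sum_erase _ _ (Finset.mem_univ t0)).symm
      rw [hsplit, hz]
      have herase : (∑ t ∈ Finset.univ.erase t0, (A (fun r => if r = t then Δ - i t else -i r) + c))
          ≤ ((d:ℝ) - 1) * ((n:ℝ)^2*c' + c) := by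
        calc (∑ t ∈ Finset.univ.erase t0, (A (fun r => if r = t then Δ - i t else -i r) + c))
            ≤ (Finset.univ.erase t0).card • ((n:ℝ)^2*c' + c) :=
              Finset.sum_le_card_nsmul _ _ _ (fun t _ => hbndA i Δ h1 h2 t)
          _ = ((d:ℝ) - 1) * ((n:ℝ)^2*c' + c) := by
              rw [Finset.card_erase_of_mem (Finset.mem_univ t0), Finset.card_univ,
                Fintype.card_fin, nsmul_eq_mul]
              have : ((d - 1 : ℕ) : ℝ) = (d:ℝ) - 1 := by
                have : 1 ≤ d := by omega
                push_cast [this]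
                ring
              rw [this]
      linarith
    have := hbnd0 i h1
    linarith
  -- conclusion
  rw [hMA]
  have hgr : IsGreatest {x : ℝ | ∃ (i : Fin d → ℤ) (Δ : ℤ),
      (∀ r, 1 ≤ i r ∧ i r ≤ (d : ℤ) * n) ∧ (∀ r, i r ≤ Δ ∧ Δ ≤ (d : ℤ) * n + i r) ∧
      x = ∑ j : Fin d → Fin 2, A (fun r => -i r + Δ * ((j r).val : ℤ))} T := by
    constructor
    · -- T is attained
      obtain ⟨v, hvinj, hvr, hvval⟩ := hMGgr.1
      have hnd : (n:ℤ) ≤ (d:ℤ) * n := by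
        have h2 : (2:ℤ) ≤ (d:ℤ) := by exact_mod_cast hd
        have h0 : (0:ℤ) ≤ (n:ℤ) := by positivity
        nlinarith
      have hvz : ∀ a : Fin (d+1), 0 ≤ ∑ r ∈ Finset.univ.erase a, v r :=
        fun a => Finset.sum_nonneg fun r _ => by linarith [(hvr r).1]
      have hvsplit : ∀ a : Fin (d+1), (∑ r, v r) = v a + ∑ r ∈ Finset.univ.erase a, v r :=
        fun a => (Finset.add_sum_erase _ _ (Finset.mem_univ a)).symm
      have hvle : ∀ a : Fin (d+1), (∑ r ∈ Finset.univ.erase a, v r) ≤ (d:ℤ) * n := by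
        intro a
        calc (∑ r ∈ Finset.univ.erase a, v r) ≤ (Finset.univ.erase a).card • (n:ℤ) :=
              Finset.sum_le_card_nsmul _ _ _ (fun r _ => (hvr r).2)
          _ = (d:ℤ) * n := by
              rw [Finset.card_erase_of_mem (Finset.mem_univ a), Finset.card_univ,
                Fintype.card_fin]
              simp [nsmul_eq_mul]
      have hc1 : ∀ r : Fin d, 1 ≤ v r.castSucc ∧ v r.castSucc ≤ (d:ℤ) * n := by
        intro r
        have := hvr r.castSucc
        exact ⟨this.1, by linarith [this.2]⟩
      have hc2 : ∀ r : Fin d, v r.castSucc ≤ (∑ a, v a) ∧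
          (∑ a, v a) ≤ (d:ℤ) * n + v r.castSucc := by
        intro r
        have hs := hvsplit r.castSucc
        have hz := hvz r.castSucc
        have hl := hvle r.castSucc
        constructor <;> linarith
      have hℓeq : (∑ a, v a) - (∑ s : Fin d, v s.castSucc) = v (Fin.last d) := by
        rw [Fin.sum_univ_castSucc]
        ring
      have hle : ∀ r : Fin d, v r.castSucc ≤ (n:ℤ) := fun r => (hvr r.castSucc).2
      have hinj : ∀ r t : Fin d, r ≠ t → v r.castSucc ≠ v t.castSucc :=
        fun r t hrt he => hrt (Fin.castSucc_inj.mp (hvinj he))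
      have hl1 : 1 ≤ (∑ a, v a) - (∑ s : Fin d, v s.castSucc) := by
        rw [hℓeq]; exact (hvr _).1
      have hl2 : (∑ a, v a) - (∑ s : Fin d, v s.castSucc) ≤ (n:ℤ) := by
        rw [hℓeq]; exact (hvr _).2
      have hlne : ∀ r : Fin d, (∑ a, v a) - (∑ s : Fin d, v s.castSucc) ≠ v r.castSucc := by
        intro r
        rw [hℓeq]
        exact fun he => (Fin.castSucc_lt_last r).ne' (hvinj he)
      refine ⟨fun r : Fin d => v r.castSucc, ∑ a, v a, hc1, hc2, ?_⟩
      have hval := hgoodval (fun r : Fin d => v r.castSucc) (∑ a, v a) hc1 hc2 hle hinj hl1 hl2 hlne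
      rw [hℓeq] at hval
      have hsv : (Fin.snoc (fun r : Fin d => v r.castSucc) (v (Fin.last d)) : Fin (d+1) → ℤ) = v := by
        funext a
        induction a using Fin.lastCases with
        | last => rw [Fin.snoc_last]
        | cast a' => rw [Fin.snoc_castSucc]
      rw [hsv] at hval
      rw [hval, ← hvval, hT]
      ring
    · -- T is an upper bound
      rintro x ⟨i, Δ, h1, h2, rfl⟩
      by_cases hle : ∀ r, i r ≤ (n:ℤ)
      · by_cases hinj : ∀ r t : Fin d, r ≠ t → i r ≠ i t
        · by_cases hl : 1 ≤ Δ - ∑ s, i s ∧ Δ - ∑ s, i s ≤ (n:ℤ)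
          · by_cases hlne : ∀ r, Δ - ∑ s, i s ≠ i r
            · rw [hgoodval i Δ h1 h2 hle hinj hl.1 hl.2 hlne]
              have hmem : psum10 w (Fin.snoc i (Δ - ∑ s, i s) : Fin (d+1) → ℤ) ∈ SG := by
                refine ⟨_, snoc_inj10 i _ hinj hlne, ?_, rfl⟩
                intro r
                induction r using Fin.lastCases with
                | last => rw [Fin.snoc_last]; exact ⟨hl.1, hl.2⟩
                | cast r' => rw [Fin.snoc_castSucc]; exact ⟨(h1 r').1, hle r'⟩
              have hle' := hMGgr.2 hmem
              have hmul := mul_le_mul_of_nonneg_left hle' hd1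
              rw [hT]
              linarith
            · push_neg at hlne
              obtain ⟨r0, hr0⟩ := hlne
              have hd1' : 1 < d := by omega
              have hd0 : 0 < d := by omega
              set t0 : Fin d := if r0.val = 0 then ⟨1, hd1'⟩ else ⟨0, hd0⟩ with ht0def
              have ht0 : t0 ≠ r0 := by
                intro he
                rw [ht0def] at he
                by_cases h : r0.val = 0
                · rw [if_pos h] at he
                  have := congrArg Fin.val he
                  simp [h] at this
                · rw [if_neg h] at he
                  have := congrArg Fin.val he
                  simp at this
                  exact h this.symm
              have hz : A (fun r => if r = t0 then Δ - i t0 else -i r) = -c := by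
                by_cases hu : ∀ r, 1 ≤ Function.update i t0 (Δ - ∑ s, i s) r ∧
                    Function.update i t0 (Δ - ∑ s, i s) r ≤ (n:ℤ)
                · rw [hArmg i Δ t0 hu, hD _ hu, if_pos ?_]
                  refine ⟨t0, r0, ht0, ?_⟩
                  rw [Function.update_self, Function.update_of_ne (fun h => ht0 h.symm), hr0]
                · exact hArmb i Δ h1 h2 t0 hu
              exact hfinA i Δ h1 h2 t0 hz
          · have hd0 : 0 < d := by omega
            have hz : A (fun r => if r = (⟨0, hd0⟩ : Fin d) then Δ - i ⟨0, hd0⟩ else -i r) = -c := by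
              apply hArmb i Δ h1 h2 ⟨0, hd0⟩
              intro hu
              have := hu ⟨0, hd0⟩
              rw [Function.update_self] at this
              exact hl this
            exact hfinA i Δ h1 h2 ⟨0, hd0⟩ hz
        · push_neg at hinj
          obtain ⟨r, t, hrt, he⟩ := hinj
          have hrange : ∀ r, 1 ≤ i r ∧ i r ≤ (n:ℤ) := fun r => ⟨(h1 r).1, hle r⟩
          have hz : A (fun r => -i r) = -c := by
            rw [hA1 i hrange, hD i hrange, if_pos ⟨r, t, hrt, he⟩]
          exact hfin0 i Δ h1 h2 hz
      · exact hfin0 i Δ h1 h2 (hE0b i h1 hle)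
  exact hgr.csSup_eq
end

section
/- Let d, n ≥ 1, let A be a central array in d dimensions of side-length 2n+1, let c' be the maximum of |A[x]| over all x, and set c = 100·2^d·c'. Define A' by A'[x] = A[x] + c if x_r < 0 for all r ∈ [d], and A'[x] = A[x] otherwise. Then the maximum over i ∈ {−n,…,n}^d and integers Δ with 1 ≤ Δ ≤ 2n and i_r + Δ ≤ n for all r of Σ_{j ∈ B_d} (−1)^{‖j‖₁} · A'[i + Δ·j] equals c plus the maximum over i ∈ [n]^d and integers Δ with 1 ≤ Δ ≤ 2n and i_r ≤ Δ ≤ n + i_r for all r of Σ_{j ∈ B_d} (−1)^{‖j‖₁} · A[−i + Δ·j]. -/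
open Finset

lemma sum_pm_le {d : ℕ} (f : (Fin d → Fin 2) → ℝ) (b : ℝ) (hf : ∀ j, |f j| ≤ b) :
    ∑ j : Fin d → Fin 2, (-1 : ℝ) ^ (∑ r, (j r).val) * f j ≤ 2 ^ d * b := by
  calc ∑ j : Fin d → Fin 2, (-1 : ℝ) ^ (∑ r, (j r).val) * f j
      ≤ ∑ _j : Fin d → Fin 2, b := by
        apply Finset.sum_le_sum
        intro j _
        calc (-1 : ℝ) ^ (∑ r, (j r).val) * f j ≤ |(-1 : ℝ) ^ (∑ r, (j r).val) * f j| :=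
              le_abs_self _
        _ = |f j| := by rw [abs_mul, abs_pow, abs_neg, abs_one, one_pow, one_mul]
        _ ≤ b := hf j
    _ = 2 ^ d * b := by
        rw [Finset.sum_const, Finset.card_univ, nsmul_eq_mul]
        norm_num [Fintype.card_fun]

lemma sum_pm_ge {d : ℕ} (f : (Fin d → Fin 2) → ℝ) (b : ℝ) (hf : ∀ j, |f j| ≤ b) :
    -(2 ^ d * b) ≤ ∑ j : Fin d → Fin 2, (-1 : ℝ) ^ (∑ r, (j r).val) * f j := by
  have := sum_pm_le (fun j => -f j) b (by intro j; rw [abs_neg]; exact hf j)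
  simp only [mul_neg, Finset.sum_neg_distrib] at this
  linarith

lemma ind_sum_eq_c {d : ℕ} (Q : Fin d → Fin 2 → Prop)
    [DecidablePred fun j : Fin d → Fin 2 => ∀ r, Q r (j r)]
    (h0 : ∀ r, Q r 0) (h1 : ∀ r, ¬ Q r 1) (c : ℝ) :
    ∑ j : Fin d → Fin 2, (-1 : ℝ) ^ (∑ r, (j r).val) *
      (if ∀ r, Q r (j r) then c else 0) = c := by
  rw [Finset.sum_eq_single_of_mem (fun _ => (0 : Fin 2)) (Finset.mem_univ _)]
  · simp [h0]
  · intro j _ hj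
    have : ∃ r, j r ≠ 0 := by
      by_contra h
      push_neg at h
      exact hj (funext h)
    obtain ⟨r, hr⟩ := this
    have hr1 : j r = 1 := by omega
    rw [if_neg, mul_zero]
    intro h
    exact h1 r (hr1 ▸ h r)

lemma ind_sum_eq_zero_flip {d : ℕ} (r₀ : Fin d) (Q : Fin d → Fin 2 → Prop)
    [DecidablePred fun j : Fin d → Fin 2 => ∀ r, Q r (j r)]
    (hQ : ∀ b, Q r₀ b) (c : ℝ) :
    ∑ j : Fin d → Fin 2, (-1 : ℝ) ^ (∑ r, (j r).val) *
      (if ∀ r, Q r (j r) then c else 0) = 0 := by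
  set f : (Fin d → Fin 2) → ℝ := fun j => (-1 : ℝ) ^ (∑ r, (j r).val) *
      (if ∀ r, Q r (j r) then c else 0) with hf
  set g : (Fin d → Fin 2) → (Fin d → Fin 2) := fun j => Function.update j r₀ (j r₀ + 1) with hgdef
  have hval2 : ∀ b : Fin 2, b + 1 + 1 = b := by decide
  have hinv : Function.Involutive g := by
    intro j
    funext r
    by_cases hr : r = r₀
    · subst hr; simp [g, hval2]
    · simp [g, Function.update_of_ne hr]
  have hsum := Equiv.sum_comp hinv.toPerm f
  have hneg : ∀ j, f (g j) = - f j := by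
    intro j
    have e1 : ∑ r, ((g j) r).val = ((j r₀ + 1) : Fin 2).val + ∑ r ∈ univ.erase r₀, (j r).val := by
      rw [← Finset.add_sum_erase _ _ (Finset.mem_univ r₀)]
      congr 1
      · simp [g]
      · exact Finset.sum_congr rfl fun r hr => by
          simp [g, Function.update_of_ne (Finset.ne_of_mem_erase hr)]
    have e2 : ∑ r, (j r).val = (j r₀).val + ∑ r ∈ univ.erase r₀, (j r).val :=
      (Finset.add_sum_erase _ _ (Finset.mem_univ r₀)).symm
    have happ : ∀ r, g j r = if r = r₀ then j r₀ + 1 else j r := by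
      intro r
      by_cases hr : r = r₀
      · rw [if_pos hr, hr]; simp [g]
      · rw [if_neg hr]; simp [g, Function.update_of_ne hr]
    have econd : (∀ r, Q r (g j r)) ↔ (∀ r, Q r (j r)) := by
      constructor <;> intro h r
      · by_cases hr : r = r₀
        · rw [hr]; exact hQ _
        · have := h r; rwa [happ r, if_neg hr] at this
      · rw [happ r]
        split_ifs with hr
        · rw [hr]; exact hQ _
        · exact h r
    rw [hf]
    simp only
    rw [e1, e2, if_congr econd rfl rfl]
    have h2 : j r₀ = 0 ∨ j r₀ = 1 := by omega
    have h11 : ((1 : Fin 2) + 1).val = 0 := rfl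
    have h22 : ((2 : Fin 2)).val = 0 := rfl
    rcases h2 with h | h <;> rw [h] <;>
      norm_num [pow_add, h11, h22] <;> split_ifs <;> ring
  have key : (∑ j, f j) = - ∑ j, f j := by
    simp only [Function.Involutive.coe_toPerm] at hsum
    conv_lhs => rw [← hsum]
    rw [Finset.sum_congr rfl fun j _ => hneg j, Finset.sum_neg_distrib]
  linarith [key]

lemma key_split {d : ℕ} (n : ℕ) (A A' : (Fin d → ℤ) → ℝ) (c : ℝ)
    (hA' : ∀ x : Fin d → ℤ, (∀ r, |x r| ≤ (n : ℤ)) →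
      A' x = if ∀ r, x r < 0 then A x + c else A x)
    (i : Fin d → ℤ) (Δ : ℤ)
    (hval : ∀ (j : Fin d → Fin 2) r, |i r + Δ * ((j r).val : ℤ)| ≤ (n : ℤ)) :
    ∑ j : Fin d → Fin 2, (-1 : ℝ) ^ (∑ r, (j r).val) *
        A' (fun r => i r + Δ * ((j r).val : ℤ))
    = (∑ j : Fin d → Fin 2, (-1 : ℝ) ^ (∑ r, (j r).val) *
        A (fun r => i r + Δ * ((j r).val : ℤ)))
      + ∑ j : Fin d → Fin 2, (-1 : ℝ) ^ (∑ r, (j r).val) *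
          (if ∀ r, i r + Δ * ((j r).val : ℤ) < 0 then c else 0) := by
  rw [← Finset.sum_add_distrib]
  apply Finset.sum_congr rfl
  intro j _
  rw [hA' _ (hval j)]
  by_cases h : ∀ r, i r + Δ * ((j r).val : ℤ) < 0
  · rw [if_pos h, if_pos h]; ring
  · rw [if_neg h, if_neg h]; ring

lemma key_eq_pos {d : ℕ} (n : ℕ) (A A' : (Fin d → ℤ) → ℝ) (c : ℝ)
    (hA' : ∀ x : Fin d → ℤ, (∀ r, |x r| ≤ (n : ℤ)) →
      A' x = if ∀ r, x r < 0 then A x + c else A x)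
    (i : Fin d → ℤ) (Δ : ℤ)
    (h1 : ∀ r, i r < 0) (h2 : ∀ r, 0 ≤ i r + Δ) (h3 : ∀ r, i r + Δ ≤ (n : ℤ))
    (h4 : ∀ r, -(n : ℤ) ≤ i r) :
    ∑ j : Fin d → Fin 2, (-1 : ℝ) ^ (∑ r, (j r).val) *
        A' (fun r => i r + Δ * ((j r).val : ℤ))
    = c + ∑ j : Fin d → Fin 2, (-1 : ℝ) ^ (∑ r, (j r).val) *
        A (fun r => i r + Δ * ((j r).val : ℤ)) := by
  have hval : ∀ (j : Fin d → Fin 2) r, |i r + Δ * ((j r).val : ℤ)| ≤ (n : ℤ) := by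
    intro j r
    have hj : ((j r).val : ℤ) = 0 ∨ ((j r).val : ℤ) = 1 := by
      have := (j r).isLt; omega
    have := h1 r; have := h2 r; have := h3 r; have := h4 r
    rcases hj with h | h <;> rw [h] <;> rw [abs_le] <;> constructor <;> nlinarith
  rw [key_split n A A' c hA' i Δ hval,
    ind_sum_eq_c (fun r b => i r + Δ * (b.val : ℤ) < 0)
      (fun r => by simpa using h1 r)
      (fun r => by simp only [Fin.val_one, Nat.cast_one, mul_one]; have := h2 r; omega) c]
  ring

lemma key_eq_zero {d : ℕ} (n : ℕ) (A A' : (Fin d → ℤ) → ℝ) (c : ℝ)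
    (hA' : ∀ x : Fin d → ℤ, (∀ r, |x r| ≤ (n : ℤ)) →
      A' x = if ∀ r, x r < 0 then A x + c else A x)
    (i : Fin d → ℤ) (Δ : ℤ) (hΔ : 1 ≤ Δ)
    (hub : ∀ r, i r + Δ ≤ (n : ℤ)) (hlb : ∀ r, -(n : ℤ) ≤ i r ∧ i r ≤ (n : ℤ))
    (hnot : ¬ ∀ r, i r < 0 ∧ 0 ≤ i r + Δ) :
    ∑ j : Fin d → Fin 2, (-1 : ℝ) ^ (∑ r, (j r).val) *
        A' (fun r => i r + Δ * ((j r).val : ℤ))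
    = ∑ j : Fin d → Fin 2, (-1 : ℝ) ^ (∑ r, (j r).val) *
        A (fun r => i r + Δ * ((j r).val : ℤ)) := by
  have hval : ∀ (j : Fin d → Fin 2) r, |i r + Δ * ((j r).val : ℤ)| ≤ (n : ℤ) := by
    intro j r
    have hj : ((j r).val : ℤ) = 0 ∨ ((j r).val : ℤ) = 1 := by
      have := (j r).isLt; omega
    have := hub r; have := (hlb r).1; have := (hlb r).2
    rcases hj with h | h <;> rw [h] <;> rw [abs_le] <;> constructor <;> nlinarith
  rw [key_split n A A' c hA' i Δ hval]
  push_neg at hnot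
  obtain ⟨r₀, hr₀⟩ := hnot
  by_cases hp : 0 ≤ i r₀
  · have hz : ∑ j : Fin d → Fin 2, (-1 : ℝ) ^ (∑ r, (j r).val) *
        (if ∀ r, i r + Δ * ((j r).val : ℤ) < 0 then c else 0) = 0 := by
      apply Finset.sum_eq_zero
      intro j _
      rw [if_neg, mul_zero]
      intro h
      have hmul : (0 : ℤ) ≤ Δ * ((j r₀).val : ℤ) :=
        mul_nonneg (by omega) (by positivity)
      have := h r₀
      omega
    rw [hz]; ring
  · have h1 : i r₀ < 0 := by omega
    have h2 : i r₀ + Δ < 0 := hr₀ h1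
    rw [ind_sum_eq_zero_flip r₀ (fun r b => i r + Δ * (b.val : ℤ) < 0)
      (fun b => by
        have hb : (b.val : ℤ) = 0 ∨ (b.val : ℤ) = 1 := by have := b.isLt; omega
        show i r₀ + Δ * (b.val : ℤ) < 0
        rcases hb with h | h <;> rw [h] <;> omega) c]
    ring

theorem stmt_11 (d n : ℕ) (hd : 1 ≤ d) (hn : 1 ≤ n)
    (A A' : (Fin d → ℤ) → ℝ) (c' c : ℝ)
    (hc' : IsGreatest {y : ℝ | ∃ x : Fin d → ℤ, (∀ r, |x r| ≤ (n : ℤ)) ∧ y = |A x|} c')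
    (hc : c = 100 * 2 ^ d * c')
    (hA' : ∀ x : Fin d → ℤ, (∀ r, |x r| ≤ (n : ℤ)) →
      A' x = if ∀ r, x r < 0 then A x + c else A x) :
    sSup {v : ℝ | ∃ (i : Fin d → ℤ) (Δ : ℤ),
        (∀ r, -(n : ℤ) ≤ i r ∧ i r ≤ (n : ℤ)) ∧ 1 ≤ Δ ∧ Δ ≤ 2 * (n : ℤ) ∧
        (∀ r, i r + Δ ≤ (n : ℤ)) ∧
        v = ∑ j : Fin d → Fin 2, (-1 : ℝ) ^ (∑ r, (j r).val) *
              A' (fun r => i r + Δ * ((j r).val : ℤ))}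
      = c + sSup {v : ℝ | ∃ (i : Fin d → ℤ) (Δ : ℤ),
          (∀ r, 1 ≤ i r ∧ i r ≤ (n : ℤ)) ∧ 1 ≤ Δ ∧ Δ ≤ 2 * (n : ℤ) ∧
          (∀ r, i r ≤ Δ ∧ Δ ≤ (n : ℤ) + i r) ∧
          v = ∑ j : Fin d → Fin 2, (-1 : ℝ) ^ (∑ r, (j r).val) *
                A (fun r => -i r + Δ * ((j r).val : ℤ))} := by
  set S1 : Set ℝ := {v : ℝ | ∃ (i : Fin d → ℤ) (Δ : ℤ),
        (∀ r, -(n : ℤ) ≤ i r ∧ i r ≤ (n : ℤ)) ∧ 1 ≤ Δ ∧ Δ ≤ 2 * (n : ℤ) ∧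
        (∀ r, i r + Δ ≤ (n : ℤ)) ∧
        v = ∑ j : Fin d → Fin 2, (-1 : ℝ) ^ (∑ r, (j r).val) *
              A' (fun r => i r + Δ * ((j r).val : ℤ))} with hS1
  set S2 : Set ℝ := {v : ℝ | ∃ (i : Fin d → ℤ) (Δ : ℤ),
          (∀ r, 1 ≤ i r ∧ i r ≤ (n : ℤ)) ∧ 1 ≤ Δ ∧ Δ ≤ 2 * (n : ℤ) ∧
          (∀ r, i r ≤ Δ ∧ Δ ≤ (n : ℤ) + i r) ∧
          v = ∑ j : Fin d → Fin 2, (-1 : ℝ) ^ (∑ r, (j r).val) *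
                A (fun r => -i r + Δ * ((j r).val : ℤ))} with hS2
  have hc'0 : 0 ≤ c' := by
    obtain ⟨x, _, hy⟩ := hc'.1
    rw [hy]; positivity
  have hc0 : 0 ≤ c := by rw [hc]; positivity
  have hAb : ∀ x : Fin d → ℤ, (∀ r, |x r| ≤ (n : ℤ)) → |A x| ≤ c' :=
    fun x hx => hc'.2 ⟨x, hx, rfl⟩
  -- bounds for S2 elements
  have hS2bound : ∀ v ∈ S2, -(2 ^ d * c') ≤ v ∧ v ≤ 2 ^ d * c' := by
    rintro v ⟨i, Δ, hi, hΔ1, hΔ2, hiΔ, rfl⟩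
    have hf : ∀ j : Fin d → Fin 2, |A (fun r => -i r + Δ * ((j r).val : ℤ))| ≤ c' := by
      intro j
      apply hAb
      intro r
      have hj : ((j r).val : ℤ) = 0 ∨ ((j r).val : ℤ) = 1 := by
        have := (j r).isLt; omega
      have := (hi r).1; have := (hi r).2; have := (hiΔ r).1; have := (hiΔ r).2
      rcases hj with h | h <;> rw [h] <;> rw [abs_le] <;> constructor <;> nlinarith
    exact ⟨sum_pm_ge _ c' hf, sum_pm_le _ c' hf⟩
  have hS2ne : S2.Nonempty := by
    refine ⟨_, ⟨fun _ => 1, 1, fun r => ⟨le_refl _, ?_⟩,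
      le_refl _, ?_, fun r => ⟨le_refl _, ?_⟩, rfl⟩⟩
    · show (1 : ℤ) ≤ (n : ℤ); omega
    · show (1 : ℤ) ≤ 2 * (n : ℤ); omega
    · show (1 : ℤ) ≤ (n : ℤ) + 1; omega
  have hS2bdd : BddAbove S2 := ⟨2 ^ d * c', fun v hv => (hS2bound v hv).2⟩
  obtain ⟨w₀, hw₀⟩ := hS2ne
  have hw₀ge : -(2 ^ d * c') ≤ w₀ := (hS2bound w₀ hw₀).1
  have hw₀M : w₀ ≤ sSup S2 := le_csSup hS2bdd hw₀
  -- c + S2 ⊆ S1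
  have mem1 : ∀ w ∈ S2, c + w ∈ S1 := by
    rintro w ⟨i, Δ, hi, hΔ1, hΔ2, hiΔ, rfl⟩
    refine ⟨fun r => -(i r), Δ, ?_, hΔ1, hΔ2, ?_, ?_⟩
    · intro r
      have h1 := (hi r).1; have h2 := (hi r).2
      constructor
      · show -(n : ℤ) ≤ -(i r); omega
      · show -(i r) ≤ (n : ℤ); omega
    · intro r; have := (hiΔ r).2; show -(i r) + Δ ≤ (n : ℤ); omega
    · exact (key_eq_pos n A A' c hA' (fun r => -(i r)) Δ
        (fun r => by show -(i r) < 0; have := (hi r).1; omega)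
        (fun r => by show 0 ≤ -(i r) + Δ; have := (hiΔ r).1; omega)
        (fun r => by show -(i r) + Δ ≤ (n : ℤ); have := (hiΔ r).2; omega)
        (fun r => by show -(n : ℤ) ≤ -(i r); have := (hi r).2; omega)).symm
  have hS1ne : S1.Nonempty := ⟨c + w₀, mem1 w₀ hw₀⟩
  -- every element of S1 is ≤ c + sSup S2
  have le1 : ∀ v ∈ S1, v ≤ c + sSup S2 := by
    rintro v ⟨i, Δ, hi, hΔ1, hΔ2, hiΔ, rfl⟩
    by_cases H : ∀ r, i r < 0 ∧ 0 ≤ i r + Δ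
    · rw [key_eq_pos n A A' c hA' i Δ (fun r => (H r).1) (fun r => (H r).2) hiΔ
        (fun r => (hi r).1)]
      have hmem : (∑ j : Fin d → Fin 2, (-1 : ℝ) ^ (∑ r, (j r).val) *
          A (fun r => i r + Δ * ((j r).val : ℤ))) ∈ S2 := by
        refine ⟨fun r => -(i r), Δ, ?_, hΔ1, hΔ2, ?_, ?_⟩
        · intro r
          have h1 := (H r).1; have h2 := (hi r).1
          constructor
          · show (1 : ℤ) ≤ -(i r); omega
          · show -(i r) ≤ (n : ℤ); omega
        · intro r
          have h1 := (H r).2; have h2 := hiΔ r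
          constructor
          · show -(i r) ≤ Δ; omega
          · show Δ ≤ (n : ℤ) + -(i r); omega
        · apply Finset.sum_congr rfl
          intro j _
          have hfe : (fun r => -(fun r => -(i r)) r + Δ * ((j r).val : ℤ))
              = (fun r => i r + Δ * ((j r).val : ℤ)) := by
            funext r; show -(-(i r)) + _ = _; rw [neg_neg]
          rw [hfe]
      have := le_csSup hS2bdd hmem
      linarith
    · rw [key_eq_zero n A A' c hA' i Δ hΔ1 hiΔ hi H]
      have hf : ∀ j : Fin d → Fin 2, |A (fun r => i r + Δ * ((j r).val : ℤ))| ≤ c' := by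
        intro j
        apply hAb
        intro r
        have hj : ((j r).val : ℤ) = 0 ∨ ((j r).val : ℤ) = 1 := by
          have := (j r).isLt; omega
        have := (hi r).1; have := (hi r).2; have := hiΔ r
        rcases hj with h | h <;> rw [h] <;> rw [abs_le] <;> constructor <;> nlinarith
      have hle := sum_pm_le _ c' hf
      have h2d : (0 : ℝ) ≤ 2 ^ d := by positivity
      nlinarith [hw₀M, hw₀ge, hle, mul_nonneg h2d hc'0, hc]
  have ub : sSup S1 ≤ c + sSup S2 := csSup_le hS1ne le1
  have lb : sSup S2 ≤ sSup S1 - c := by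
    apply csSup_le ⟨w₀, hw₀⟩
    intro w hw
    have := le_csSup ⟨c + sSup S2, le1⟩ (mem1 w hw)
    linarith
  linarith
end

section
/- Let d ≥ 1 and let (p_1, w_1),…,(p_N, w_N) be finitely many points p_s ∈ ℝ^d with real weights w_s, and let C > 2·Σ_{s=1}^{N} |w_s|. For an axis-parallel box R (a product of d closed intervals), define weight(R) = (C if the origin 0 ∈ R, else 0) + Σ_{s : p_s ∈ R} w_s. Then sup over all axis-parallel boxes R of weight(R) = C + (max over axis-parallel boxes R containing the origin of Σ_{s : p_s ∈ R} w_s), and every axis-parallel box attaining this supremum contains the origin. -/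
open Classical in
theorem stmt_17 (d : ℕ) (hd : 1 ≤ d) (N : ℕ)
    (p : Fin N → (Fin d → ℝ)) (wt : Fin N → ℝ)
    (C : ℝ) (hC : 2 * ∑ s, |wt s| < C) :
    sSup {x : ℝ | ∃ a b : Fin d → ℝ,
        x = (if ∀ i, a i ≤ 0 ∧ 0 ≤ b i then C else 0)
            + ∑ s, if ∀ i, a i ≤ p s i ∧ p s i ≤ b i then wt s else 0}
      = C + sSup {x : ℝ | ∃ a b : Fin d → ℝ, (∀ i, a i ≤ 0 ∧ 0 ≤ b i) ∧
            x = ∑ s, if ∀ i, a i ≤ p s i ∧ p s i ≤ b i then wt s else 0}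
    ∧ ∀ a b : Fin d → ℝ,
        (if ∀ i, a i ≤ 0 ∧ 0 ≤ b i then C else 0)
            + (∑ s, if ∀ i, a i ≤ p s i ∧ p s i ≤ b i then wt s else 0)
          = sSup {x : ℝ | ∃ a b : Fin d → ℝ,
              x = (if ∀ i, a i ≤ 0 ∧ 0 ≤ b i then C else 0)
                  + ∑ s, if ∀ i, a i ≤ p s i ∧ p s i ≤ b i then wt s else 0} →
        ∀ i, a i ≤ 0 ∧ 0 ≤ b i := by
  set W : ℝ := ∑ s, |wt s| with hW
  have hWnn : 0 ≤ W := Finset.sum_nonneg fun s _ => abs_nonneg _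
  have hsum_bd : ∀ a b : Fin d → ℝ,
      |∑ s, if ∀ i, a i ≤ p s i ∧ p s i ≤ b i then wt s else 0| ≤ W := by
    intro a b
    calc |∑ s, if ∀ i, a i ≤ p s i ∧ p s i ≤ b i then wt s else 0|
        ≤ ∑ s, |if ∀ i, a i ≤ p s i ∧ p s i ≤ b i then wt s else 0| :=
          Finset.abs_sum_le_sum_abs _ _
      _ ≤ W := Finset.sum_le_sum fun s _ => by
          split
          · exact le_refl _
          · simp [abs_nonneg]
  set A : Set ℝ := {x : ℝ | ∃ a b : Fin d → ℝ,
      x = (if ∀ i, a i ≤ 0 ∧ 0 ≤ b i then C else 0)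
          + ∑ s, if ∀ i, a i ≤ p s i ∧ p s i ≤ b i then wt s else 0} with hA
  set B : Set ℝ := {x : ℝ | ∃ a b : Fin d → ℝ, (∀ i, a i ≤ 0 ∧ 0 ≤ b i) ∧
      x = ∑ s, if ∀ i, a i ≤ p s i ∧ p s i ≤ b i then wt s else 0} with hB
  have hCpos : 0 < C := lt_of_le_of_lt (by linarith) hC
  have hBne : B.Nonempty := by
    refine ⟨_, (fun _ => (0:ℝ)), (fun _ => (0:ℝ)), fun i => ⟨le_refl _, le_refl _⟩, rfl⟩
  have hBbdd : BddAbove B := by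
    refine ⟨W, fun x hx => ?_⟩
    obtain ⟨a, b, _, rfl⟩ := hx
    exact le_trans (le_abs_self _) (hsum_bd a b)
  have hBlb : -W ≤ sSup B := by
    obtain ⟨x, hx⟩ := hBne
    have h1 : x ≤ sSup B := le_csSup hBbdd hx
    obtain ⟨a, b, _, rfl⟩ := hx
    have := (abs_le.mp (hsum_bd a b)).1
    linarith
  have hAne : A.Nonempty := ⟨_, (fun _ => (0:ℝ)), (fun _ => (0:ℝ)), rfl⟩
  have hAbdd : BddAbove A := by
    refine ⟨C + W, fun x hx => ?_⟩
    obtain ⟨a, b, rfl⟩ := hx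
    have h2 := (abs_le.mp (hsum_bd a b)).2
    split
    · linarith
    · linarith
  have hmain : sSup A = C + sSup B := by
    apply le_antisymm
    · apply csSup_le hAne
      intro x hx
      obtain ⟨a, b, rfl⟩ := hx
      by_cases h : ∀ i, a i ≤ 0 ∧ 0 ≤ b i
      · have hmem : (∑ s, if ∀ i, a i ≤ p s i ∧ p s i ≤ b i then wt s else 0) ∈ B :=
          ⟨a, b, h, rfl⟩
        have := le_csSup hBbdd hmem
        simp only [if_pos h]
        linarith
      · simp only [if_neg h, zero_add]
        have h2 := (abs_le.mp (hsum_bd a b)).2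
        linarith
    · have : sSup B ≤ sSup A - C := by
        apply csSup_le hBne
        intro x hx
        obtain ⟨a, b, hab, rfl⟩ := hx
        have hmem : (C + ∑ s, if ∀ i, a i ≤ p s i ∧ p s i ≤ b i then wt s else 0) ∈ A := by
          refine ⟨a, b, ?_⟩
          rw [if_pos hab]
        have := le_csSup hAbdd hmem
        linarith
      linarith
  refine ⟨hmain, ?_⟩
  intro a b heq
  by_contra h
  rw [if_neg h, zero_add, hmain] at heq
  have h2 := (abs_le.mp (hsum_bd a b)).2
  linarith
end
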